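/- arXiv:2104.06870 — 3 statements merged into one kernel-verified Lean document; each statement's English description precedes it below -/
import Mathlib

section
/- For every n ∈ ℕ and every real x with 0 < x ≤ n + 1/2, the spherical Bessel function satisfies j_n(x) > 0. Consequently, every positive zero of j_n is strictly greater than n + 1/2. -/
open Real Filter Set

noncomputable section

/-- The spherical Bessel function of the first kind `jₙ`, defined by
`j₀(x) = sin x / x`, `j₁(x) = sin x / x² - cos x / x`, and the recurrence
`j_{n+1}(x) = ((2n+1)/x) jₙ(x) - j_{n-1}(x)` for `n ≥ 1`. -/
noncomputable def sbj : ℕ → ℝ → ℝ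
  | 0 => fun x => Real.sin x / x
  | 1 => fun x => Real.sin x / x ^ 2 - Real.cos x / x
  | n + 2 => fun x => ((2 * (n + 1 : ℝ) + 1) / x) * sbj (n + 1) x - sbj n x

/-- `r` (on indices `s ≥ 1`) is the increasing enumeration of the positive zeros of `jₙ`. -/
def IsZeroEnum (n : ℕ) (r : ℕ → ℝ) : Prop :=
  StrictMonoOn r (Set.Ici 1) ∧ 0 < r 1 ∧ (∀ s, 1 ≤ s → sbj n (r s) = 0) ∧
    ∀ x : ℝ, 0 < x → sbj n x = 0 → ∃ s, 1 ≤ s ∧ x = r s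

/-- The determinant function whose positive zeros are the TE transmission eigenvalues
of the ball of radius `R` with constant permittivity `ε₀²`. -/
noncomputable def fTE (R ε₀ : ℝ) (n : ℕ) (k : ℝ) : ℝ :=
  k * (ε₀ * sbj n (k * R) * sbj (n + 1) (k * ε₀ * R)
        - sbj (n + 1) (k * R) * sbj n (k * ε₀ * R))

/-- The determinant function whose positive zeros are the TM transmission eigenvalues
of the ball of radius `R` with constant permittivity `ε₀²`. -/
noncomputable def fTM (R ε₀ : ℝ) (n : ℕ) (k : ℝ) : ℝ :=
  ((1 - ε₀ ^ 2) * (n + 1 : ℝ) / R) * sbj n (k * R) * sbj n (k * ε₀ * R)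
    + k * ε₀ * (ε₀ * sbj n (k * ε₀ * R) * sbj (n + 1) (k * R)
        - sbj n (k * R) * sbj (n + 1) (k * ε₀ * R))


section SbjAux
open Topology

lemma sbj_zero (x : ℝ) : sbj 0 x = Real.sin x / x := rfl
lemma sbj_one (x : ℝ) : sbj 1 x = Real.sin x / x ^ 2 - Real.cos x / x := rfl
lemma sbj_add_two (n : ℕ) (x : ℝ) :
    sbj (n + 2) x = ((2 * ((n : ℝ) + 1) + 1) / x) * sbj (n + 1) x - sbj n x := rfl


lemma hasDerivAt_sbj : ∀ (n : ℕ) (x : ℝ), x ≠ 0 →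
    HasDerivAt (sbj n) (((n : ℝ) / x) * sbj n x - sbj (n + 1) x) x
  | 0, x, hx => by
    have h : HasDerivAt (sbj 0) ((Real.cos x * x - Real.sin x * 1) / x ^ 2) x :=
      (Real.hasDerivAt_sin x).div (hasDerivAt_id x) hx
    convert h using 1
    simp only [Nat.cast_zero, zero_add]
    rw [sbj_one, sbj_zero]
    field_simp
    ring
  | 1, x, hx => by
    have hx2 : x ^ 2 ≠ 0 := pow_ne_zero 2 hx
    have hs := (Real.hasDerivAt_sin x).div (hasDerivAt_pow 2 x) hx2
    have hc := (Real.hasDerivAt_cos x).div (hasDerivAt_id x) hx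
    have h : HasDerivAt (sbj 1) _ x := hs.sub hc
    convert h using 1
    have e2 := sbj_add_two 0 x
    norm_num at e2
    rw [show (1 + 1 : ℕ) = 2 from rfl, e2, sbj_one, sbj_zero]
    norm_num
    field_simp
    ring
  | (n + 2), x, hx => by
    have h1 := hasDerivAt_sbj (n + 1) x hx
    have h0 := hasDerivAt_sbj n x hx
    have hc : HasDerivAt (fun y : ℝ => (2 * ((n : ℝ) + 1) + 1) / y)
        ((0 * x - (2 * ((n : ℝ) + 1) + 1) * 1) / x ^ 2) x :=
      (hasDerivAt_const x _).div (hasDerivAt_id x) hx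
    have h : HasDerivAt (sbj (n + 2)) _ x := (hc.mul h1).sub h0
    convert h using 1
    have e3 : sbj (n + 2 + 1) x = ((2 * (((n:ℕ) + 1 : ℕ) : ℝ) + 3) / x) * sbj (n + 1 + 1) x - sbj (n + 1) x := by
      have h := sbj_add_two (n + 1) x
      push_cast at h ⊢
      convert h using 2 <;> ring
    rw [e3]
    have e2 : sbj (n + 1 + 1) x = ((2 * ((n : ℝ) + 1) + 1) / x) * sbj (n + 1) x - sbj n x :=
      sbj_add_two n x
    rw [e2]
    push_cast
    field_simp
    ring


-- H1
lemma abs_le_of_hasDerivAt_of_tendsto {f g : ℝ → ℝ} {x M : ℝ} (hx : 0 < x)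
    (hd : ∀ y ∈ Ioc (0:ℝ) x, HasDerivAt f (g y) y)
    (hM : ∀ y ∈ Ioc (0:ℝ) x, |g y| ≤ M)
    (h0 : Tendsto f (𝓝[>] (0:ℝ)) (𝓝 0)) : |f x| ≤ M * x := by
  have key : ∀ y ∈ Ioc (0:ℝ) x, |f x - f y| ≤ M * (x - y) := by
    intro y hy
    have hsub : Icc y x ⊆ Ioc (0:ℝ) x := fun z hz => ⟨lt_of_lt_of_le hy.1 hz.1, hz.2⟩
    have h := Convex.norm_image_sub_le_of_norm_hasDerivWithin_le
      (f' := g) (fun z hz => (hd z (hsub hz)).hasDerivWithinAt)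
      (fun z hz => by simpa using hM z (hsub hz)) (convex_Icc y x)
      (left_mem_Icc.2 hy.2) (right_mem_Icc.2 hy.2)
    simpa [Real.norm_eq_abs, abs_of_nonneg (sub_nonneg.mpr hy.2)] using h
  have hidz : Tendsto (fun y : ℝ => y) (𝓝[>] (0:ℝ)) (𝓝 0) :=
    tendsto_id.mono_left nhdsWithin_le_nhds
  have hlim : Tendsto (fun y => M * (x - y) + |f y|) (𝓝[>] (0:ℝ)) (𝓝 (M * x)) := by
    have h' : Tendsto (fun y : ℝ => M * (x - y) + |f y|) (𝓝[>] (0:ℝ))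
        (𝓝 (M * (x - 0) + |(0:ℝ)|)) :=
      ((tendsto_const_nhds.sub hidz).const_mul M).add h0.abs
    simpa using h'
  apply ge_of_tendsto hlim
  filter_upwards [Ioc_mem_nhdsGT_of_mem ⟨le_refl (0:ℝ), hx⟩] with y hy
  calc |f x| ≤ |f x - f y| + |f y| := by
        have := abs_add_le (f x - f y) (f y); simpa using this
    _ ≤ M * (x - y) + |f y| := by linarith [key y hy]

-- H2
lemma pos_of_hasDerivAt_of_tendsto {f g : ℝ → ℝ} {δ : ℝ}
    (hd : ∀ y ∈ Ioo (0:ℝ) δ, HasDerivAt f (g y) y)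
    (hg : ∀ y ∈ Ioo (0:ℝ) δ, 0 < g y)
    (h0 : Tendsto f (𝓝[>] (0:ℝ)) (𝓝 0)) :
    ∀ y ∈ Ioo (0:ℝ) δ, 0 < f y := by
  have hmono : StrictMonoOn f (Ioo 0 δ) := by
    apply strictMonoOn_of_deriv_pos (convex_Ioo 0 δ)
    · exact fun y hy => (hd y hy).continuousAt.continuousWithinAt
    · intro y hy
      rw [interior_Ioo] at hy
      rw [(hd y hy).deriv]
      exact hg y hy
  intro y hy
  have hz2 : y / 2 ∈ Ioo (0:ℝ) δ := ⟨by linarith [hy.1], by linarith [hy.1, hy.2]⟩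
  have h1 : f (y / 2) < f y := hmono hz2 hy (by linarith [hy.1])
  have h2 : 0 ≤ f (y / 2) := by
    apply le_of_tendsto h0
    filter_upwards [Ioo_mem_nhdsGT_of_mem (show (0:ℝ) ∈ Ico (0:ℝ) (y/2) from ⟨le_refl _, hz2.1⟩)] with w hw
    exact (hmono ⟨hw.1, lt_trans hw.2 hz2.2⟩ hz2 hw.2).le
  linarith


-- crude bound
lemma sbj_crude : ∀ n : ℕ, ∃ A : ℝ, 0 ≤ A ∧ ∀ x : ℝ, 0 < x → x ≤ 1 → |sbj n x| ≤ A / x ^ n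
  | 0 => ⟨1, zero_le_one, fun x hx hx1 => by
      have hsin : |Real.sin x| ≤ x := by
        rw [abs_of_nonneg (Real.sin_nonneg_of_nonneg_of_le_pi hx.le
          (hx1.trans (by linarith [Real.pi_gt_three])))]
        exact (Real.sin_lt hx).le
      rw [sbj_zero, abs_div, abs_of_pos hx, pow_zero, div_one, div_le_one hx]
      exact hsin⟩
  | 1 => ⟨2, by norm_num, fun x hx hx1 => by
      rw [sbj_one, pow_one]
      have h1 : |Real.sin x| ≤ x := by
        rw [abs_of_nonneg (Real.sin_nonneg_of_nonneg_of_le_pi hx.le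
          (hx1.trans (by linarith [Real.pi_gt_three])))]
        exact (Real.sin_lt hx).le
      have h2 : |Real.cos x| ≤ 1 := Real.abs_cos_le_one x
      have hx2 : (0:ℝ) < x ^ 2 := by positivity
      calc |Real.sin x / x ^ 2 - Real.cos x / x|
          ≤ |Real.sin x / x ^ 2| + |Real.cos x / x| := abs_sub _ _
        _ = |Real.sin x| / x ^ 2 + |Real.cos x| / x := by
            rw [abs_div, abs_div, abs_of_pos hx, abs_of_pos hx2]
        _ ≤ x / x ^ 2 + 1 / x := by gcongr
        _ = 2 / x := by field_simp; ring⟩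
  | (n + 2) => by
      obtain ⟨A1, hA1, h1⟩ := sbj_crude (n + 1)
      obtain ⟨A0, hA0, h0⟩ := sbj_crude n
      refine ⟨(2 * (n : ℝ) + 3) * A1 + A0, by positivity, fun x hx hx1 => ?_⟩
      rw [sbj_add_two]
      have hxn : (0:ℝ) < x ^ n := pow_pos hx n
      have hxn1 : (0:ℝ) < x ^ (n+1) := pow_pos hx _
      have hxn2 : (0:ℝ) < x ^ (n+2) := pow_pos hx _
      have hb1 := h1 x hx hx1
      have hb0 := h0 x hx hx1
      have hcoef : |(2 * ((n : ℝ) + 1) + 1) / x| = (2 * (n:ℝ) + 3) / x := by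
        rw [abs_div, abs_of_pos hx, abs_of_nonneg (by positivity)]
        ring_nf
      calc |(2 * ((n : ℝ) + 1) + 1) / x * sbj (n + 1) x - sbj n x|
          ≤ |(2 * ((n : ℝ) + 1) + 1) / x * sbj (n + 1) x| + |sbj n x| := abs_sub _ _
        _ = (2 * (n:ℝ) + 3) / x * |sbj (n + 1) x| + |sbj n x| := by
            rw [abs_mul, hcoef]
        _ ≤ (2 * (n:ℝ) + 3) / x * (A1 / x ^ (n+1)) + A0 / x ^ n := by
            gcongr
        _ = ((2 * (n:ℝ) + 3) * A1) / x ^ (n + 2) + A0 / x ^ n := by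
            rw [pow_succ]
            field_simp
            ring
        _ ≤ ((2 * (n:ℝ) + 3) * A1) / x ^ (n + 2) + A0 / x ^ (n + 2) := by
            have hpow : x ^ (n + 2) ≤ x ^ n := pow_le_pow_of_le_one hx.le hx1 (by omega)
            have := div_le_div_of_nonneg_left hA0 hxn2 hpow
            linarith
        _ = ((2 * (n:ℝ) + 3) * A1 + A0) / x ^ (n + 2) := by ring


lemma tendsto_V (n : ℕ) :
    Tendsto (fun y : ℝ => y ^ (n + 2) * sbj (n + 1) y) (𝓝[>] (0:ℝ)) (𝓝 0) := by
  obtain ⟨A, hA0, hA⟩ := sbj_crude (n + 1)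
  have hbound : ∀ᶠ y in 𝓝[>] (0:ℝ), ‖y ^ (n + 2) * sbj (n + 1) y‖ ≤ A * y := by
    filter_upwards [Ioc_mem_nhdsGT_of_mem (show (0:ℝ) ∈ Ico (0:ℝ) 1 from ⟨le_refl _, zero_lt_one⟩)] with y hy
    have h1 := hA y hy.1 hy.2
    have heq : ‖y ^ (n + 2) * sbj (n + 1) y‖ = y ^ (n + 2) * |sbj (n + 1) y| := by
      rw [norm_mul, norm_pow, Real.norm_eq_abs, Real.norm_eq_abs, abs_of_pos hy.1]
    rw [heq]
    have hp : (0:ℝ) < y ^ (n + 1) := pow_pos hy.1 _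
    calc y ^ (n + 2) * |sbj (n + 1) y| ≤ y ^ (n + 2) * (A / y ^ (n + 1)) := by
          gcongr
          exact pow_nonneg hy.1.le _
      _ = A * y := by rw [pow_succ]; field_simp
  have hg : Tendsto (fun y : ℝ => A * y) (𝓝[>] (0:ℝ)) (𝓝 0) := by
    have h' : Tendsto (fun y : ℝ => A * y) (𝓝 (0:ℝ)) (𝓝 (A * 0)) :=
      (continuous_const.mul continuous_id).tendsto 0
    simpa using h'.mono_left nhdsWithin_le_nhds
  exact squeeze_zero_norm' hbound hg

lemma hasDerivAt_V (n : ℕ) (y : ℝ) (hy : y ≠ 0) :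
    HasDerivAt (fun z : ℝ => z ^ (n + 2) * sbj (n + 1) z) (y ^ (n + 2) * sbj n y) y := by
  have h : HasDerivAt (fun z : ℝ => z ^ (n + 2) * sbj (n + 1) z) _ y := (hasDerivAt_pow (n + 2) y).mul (hasDerivAt_sbj (n + 1) y hy)
  convert h using 1
  rw [show n + 1 + 1 = n + 2 from rfl, sbj_add_two n y]
  push_cast
  field_simp
  ring

lemma sbj_abs_le : ∀ (n : ℕ) (x : ℝ), 0 < x → x ≤ 1 → |sbj n x| ≤ x ^ n := by
  intro n
  induction n with
  | zero =>
    intro x hx hx1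
    have hsin : |Real.sin x| ≤ x := by
      rw [abs_of_nonneg (Real.sin_nonneg_of_nonneg_of_le_pi hx.le
        (hx1.trans (by linarith [Real.pi_gt_three])))]
      exact (Real.sin_lt hx).le
    rw [sbj_zero, abs_div, abs_of_pos hx, pow_zero, div_le_one hx]
    exact hsin
  | succ n ih =>
    intro x hx hx1
    have key := abs_le_of_hasDerivAt_of_tendsto (f := fun z : ℝ => z ^ (n + 2) * sbj (n + 1) z)
      (g := fun z : ℝ => z ^ (n + 2) * sbj n z) (M := x ^ (2 * n + 2)) hx
      (fun y hy => hasDerivAt_V n y (ne_of_gt hy.1))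
      (fun y hy => by
        have h1 := ih y hy.1 (hy.2.trans hx1)
        have heq : |y ^ (n + 2) * sbj n y| = y ^ (n + 2) * |sbj n y| := by
          rw [abs_mul, abs_pow, abs_of_pos hy.1]
        rw [heq]
        calc y ^ (n + 2) * |sbj n y| ≤ y ^ (n + 2) * y ^ n := by
              gcongr
              exact pow_nonneg hy.1.le _
          _ = y ^ (2 * n + 2) := by ring
          _ ≤ x ^ (2 * n + 2) := pow_le_pow_left₀ hy.1.le hy.2 _)
      (tendsto_V n)
    have hxp : (0:ℝ) < x ^ (n + 2) := pow_pos hx _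
    rw [abs_mul, abs_pow, abs_of_pos hx] at key
    have heq : x ^ (2 * n + 2) * x = x ^ (n + 2) * x ^ (n + 1) := by ring
    rw [heq] at key
    exact le_of_mul_le_mul_left key hxp

lemma sbj_pos_near : ∀ n : ℕ, ∃ δ : ℝ, 0 < δ ∧ ∀ y : ℝ, y ∈ Ioo 0 δ → 0 < sbj n y := by
  intro n
  induction n with
  | zero =>
    refine ⟨1, zero_lt_one, fun y hy => ?_⟩
    rw [sbj_zero]
    exact div_pos (Real.sin_pos_of_pos_of_lt_pi hy.1
      (hy.2.trans (by linarith [Real.pi_gt_three]))) hy.1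
  | succ n ih =>
    obtain ⟨δ, hδ0, hδ⟩ := ih
    refine ⟨δ, hδ0, fun y hy => ?_⟩
    have hpos := pos_of_hasDerivAt_of_tendsto
      (f := fun z : ℝ => z ^ (n + 2) * sbj (n + 1) z)
      (g := fun z : ℝ => z ^ (n + 2) * sbj n z)
      (fun w hw => hasDerivAt_V n w (ne_of_gt hw.1))
      (fun w hw => mul_pos (pow_pos hw.1 _) (hδ w hw))
      (tendsto_V n) y hy
    have hpos' : 0 < y ^ (n + 2) * sbj (n + 1) y := hpos
    by_contra hc
    push_neg at hc
    have : y ^ (n + 2) * sbj (n + 1) y ≤ 0 :=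
      mul_nonpos_of_nonneg_of_nonpos (pow_pos hy.1 _).le hc
    linarith


set_option maxHeartbeats 1000000 in
theorem sbj_main : ∀ (n : ℕ) (x : ℝ), 0 < x → x ≤ (n : ℝ) + 1 / 2 → 0 < sbj n x := by
  intro n x hx hxb
  rcases Nat.eq_zero_or_pos n with hn | hn
  · subst hn
    have hxpi : x < Real.pi := by
      have := Real.pi_gt_three
      norm_num at hxb
      linarith
    rw [sbj_zero]
    exact div_pos (Real.sin_pos_of_pos_of_lt_pi hx hxpi) hx
  · by_contra hcon
    push_neg at hcon
    obtain ⟨b, hbdef⟩ : ∃ b : ℝ, b = (n : ℝ) + 1 / 2 := ⟨_, rfl⟩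
    rw [← hbdef] at hxb
    have hn1 : (1:ℝ) ≤ (n:ℝ) := by exact_mod_cast hn
    have hb0 : (0:ℝ) < b := by rw [hbdef]; linarith
    obtain ⟨u, hu_def⟩ : ∃ u : ℝ → ℝ, u = fun y => y * sbj n y := ⟨_, rfl⟩
    obtain ⟨U, hU_def⟩ : ∃ U : ℝ → ℝ,
      U = fun y => ((n:ℝ) + 1) * sbj n y - y * sbj (n + 1) y := ⟨_, rfl⟩
    have hu : ∀ y : ℝ, y ≠ 0 → HasDerivAt u (U y) y := by
      intro y hy
      have h : HasDerivAt (fun z : ℝ => z * sbj n z) _ y := (hasDerivAt_id' (x := y)).mul (hasDerivAt_sbj n y hy)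
      rw [hu_def, hU_def]
      convert h using 1
      field_simp
      ring
    have hU : ∀ y : ℝ, y ≠ 0 → HasDerivAt U (((n:ℝ) * ((n:ℝ) + 1) / y ^ 2 - 1) * u y) y := by
      intro y hy
      have h : HasDerivAt (fun z : ℝ => ((n:ℝ) + 1) * sbj n z - z * sbj (n + 1) z) _ y := ((hasDerivAt_sbj n y hy).const_mul ((n:ℝ) + 1)).sub
        ((hasDerivAt_id' (x := y)).mul (hasDerivAt_sbj (n + 1) y hy))
      rw [hU_def, hu_def]
      convert h using 1
      rw [show n + 1 + 1 = n + 2 from rfl, sbj_add_two n y]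
      push_cast
      field_simp
      ring
    have hupos_of : ∀ y : ℝ, 0 < y → 0 < sbj n y → 0 < u y := by
      intro y h1 h2; rw [hu_def]; exact mul_pos h1 h2
    -- near-zero positivity of sbj n, hence of u
    obtain ⟨δ₀, hδ₀, hnear⟩ := sbj_pos_near n
    have hxδ₀ : δ₀ ≤ x := by
      by_contra h
      push_neg at h
      exact absurd (hnear x ⟨hx, h⟩) (not_lt.mpr hcon)
    have hcont_u : ∀ y : ℝ, y ≠ 0 → ContinuousAt u y := fun y hy => (hu y hy).continuousAt
    obtain ⟨T, hT⟩ : ∃ T : Set ℝ, T = Icc (δ₀ / 2) x ∩ u ⁻¹' Iic 0 := ⟨_, rfl⟩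
    have hTclosed : IsClosed T := by
      rw [hT]
      exact ContinuousOn.preimage_isClosed_of_isClosed
        (fun y hy => (hcont_u y (ne_of_gt (lt_of_lt_of_le (by linarith) hy.1))).continuousWithinAt)
        isClosed_Icc isClosed_Iic
    have hTne : T.Nonempty := by
      rw [hT]
      refine ⟨x, ⟨by constructor <;> linarith, ?_⟩⟩
      simp only [mem_preimage, mem_Iic, hu_def]
      exact mul_nonpos_of_nonneg_of_nonpos hx.le hcon
    have hTbdd : BddBelow T := by
      rw [hT]; exact ⟨δ₀ / 2, fun y hy => hy.1.1⟩
    obtain ⟨c, hc⟩ : ∃ c : ℝ, c = sInf T := ⟨_, rfl⟩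
    have hcT : c ∈ T := by rw [hc]; exact hTclosed.csInf_mem hTne hTbdd
    rw [hT] at hcT
    have hc_pos : 0 < c := lt_of_lt_of_le (by linarith) hcT.1.1
    have hcx : c ≤ x := hcT.1.2
    have hcb : c ≤ b := le_trans hcx hxb
    have hucle : u c ≤ 0 := hcT.2
    have hupos : ∀ y : ℝ, 0 < y → y < c → 0 < u y := by
      intro y hy1 hy2
      rcases lt_or_ge y δ₀ with h | h
      · exact hupos_of y hy1 (hnear y ⟨hy1, h⟩)
      · by_contra hcon2
        push_neg at hcon2
        have hyT : y ∈ T := by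
          rw [hT]; exact ⟨⟨by linarith, le_trans hy2.le hcx⟩, hcon2⟩
        have := csInf_le hTbdd hyT
        rw [← hc] at this
        linarith
    have huc0 : u c = 0 := by
      have hge : 0 ≤ u c := by
        have hcont := (hcont_u c (ne_of_gt hc_pos)).continuousWithinAt (s := Iio c)
        apply ge_of_tendsto hcont
        filter_upwards [Ioo_mem_nhdsLT_of_mem
          (show c ∈ Ioc (c / 2) c from ⟨by linarith, le_refl c⟩)] with y hy
        exact (hupos y (lt_trans (by linarith) hy.1) hy.2).le
      linarith
    -- derivative of u at c is nonpositive
    have hUc : U c ≤ 0 := by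
      have hd := hu c (ne_of_gt hc_pos)
      have hslope := hasDerivAt_iff_tendsto_slope.mp hd
      have hslope' : Tendsto (slope u c) (𝓝[<] c) (𝓝 (U c)) :=
        hslope.mono_left (nhdsWithin_mono c (fun y hy => ne_of_lt hy))
      apply le_of_tendsto hslope'
      filter_upwards [Ioo_mem_nhdsLT_of_mem
        (show c ∈ Ioc (c / 2) c from ⟨by linarith, le_refl c⟩)] with y hy
      have hy0 : 0 < y := lt_trans (by linarith) hy.1
      have huy : 0 < u y := hupos y hy0 hy.2
      rw [slope_def_field, huc0, sub_zero]
      apply div_nonpos_of_nonneg_of_nonpos huy.le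
      linarith [hy.2]
    -- Wronskian
    obtain ⟨ε, hεdef⟩ : ∃ ε : ℝ, ε = 1 / (2 * b) := ⟨_, rfl⟩
    have hε0 : 0 < ε := by rw [hεdef]; exact div_pos one_pos (by linarith)
    have hεb : ε * b = 1 / 2 := by rw [hεdef]; field_simp
    have hcos_pos : ∀ y : ℝ, 0 < y → y ≤ c → 0 < Real.cos (ε * y) := by
      intro y hy1 hy2
      apply Real.cos_pos_of_mem_Ioo
      constructor
      · have : 0 < ε * y := mul_pos hε0 hy1
        have := Real.pi_gt_three
        linarith
      · have h1 : ε * y ≤ ε * b := by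
          apply mul_le_mul_of_nonneg_left _ hε0.le
          linarith
        have := Real.pi_gt_three
        rw [hεb] at h1
        linarith
    obtain ⟨W, hWdef⟩ : ∃ W : ℝ → ℝ,
      W = fun y => U y * Real.cos (ε * y) + ε * (u y * Real.sin (ε * y)) := ⟨_, rfl⟩
    have hW : ∀ y : ℝ, 0 < y → HasDerivAt W
        (((n:ℝ) * ((n:ℝ) + 1) * (1 / y ^ 2 - 1 / b ^ 2)) * (u y * Real.cos (ε * y))) y := by
      intro y hy
      have hy' : y ≠ 0 := ne_of_gt hy
      have hcos : HasDerivAt (fun z : ℝ => Real.cos (ε * z)) (-Real.sin (ε * y) * (ε * 1)) y :=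
        ((hasDerivAt_id' (x := y)).const_mul ε).cos
      have hsin : HasDerivAt (fun z : ℝ => Real.sin (ε * z)) (Real.cos (ε * y) * (ε * 1)) y :=
        ((hasDerivAt_id' (x := y)).const_mul ε).sin
      have h : HasDerivAt (fun z : ℝ => U z * Real.cos (ε * z) + ε * (u z * Real.sin (ε * z))) _ y := ((hU y hy').mul hcos).add (((hu y hy').mul hsin).const_mul ε)
      rw [hWdef]
      convert h using 1
      have hbne : b ≠ 0 := ne_of_gt hb0
      have huu : u y = y * sbj n y := by rw [hu_def]
      rw [huu, hεdef, hbdef]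
      have hne : (n:ℝ) + 1 / 2 ≠ 0 := by linarith
      field_simp
      ring
    have hmono : StrictMonoOn W (Ioc 0 c) := by
      apply strictMonoOn_of_deriv_pos (convex_Ioc 0 c)
      · exact fun y hy => (hW y hy.1).continuousAt.continuousWithinAt
      · intro y hy
        rw [interior_Ioc] at hy
        rw [(hW y hy.1).deriv]
        have h1 : 0 < u y := hupos y hy.1 hy.2
        have h2 : 0 < Real.cos (ε * y) := hcos_pos y hy.1 hy.2.le
        have hyb : y < b := lt_of_lt_of_le hy.2 hcb
        have h3 : 0 < 1 / y ^ 2 - 1 / b ^ 2 := by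
          have hy2 : (0:ℝ) < y ^ 2 := pow_pos hy.1 2
          have hb2 : (0:ℝ) < b ^ 2 := pow_pos hb0 2
          have hsq : y ^ 2 < b ^ 2 := by nlinarith [hy.1, hyb]
          rw [sub_pos, div_lt_div_iff₀ hb2 hy2]
          nlinarith [hsq]
        have h4 : (0:ℝ) < (n:ℝ) * ((n:ℝ) + 1) := by nlinarith
        exact mul_pos (mul_pos h4 h3) (mul_pos h1 h2)
    have hWlim : Tendsto W (𝓝[>] (0:ℝ)) (𝓝 0) := by
      have hbound : ∀ᶠ y in 𝓝[>] (0:ℝ), ‖W y‖ ≤ ((n:ℝ) + 2 + ε) * y := by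
        filter_upwards [Ioc_mem_nhdsGT_of_mem
          (show (0:ℝ) ∈ Ico (0:ℝ) 1 from ⟨le_refl _, zero_lt_one⟩)] with y hy
        have h1 := sbj_abs_le n y hy.1 hy.2
        have h2 := sbj_abs_le (n + 1) y hy.1 hy.2
        have hyn : y ^ n ≤ y := pow_le_of_le_one hy.1.le hy.2 (by omega)
        have hyn1 : y ^ (n + 1) ≤ 1 := pow_le_one₀ hy.1.le hy.2
        have hUy : |U y| ≤ ((n:ℝ) + 1) * y + y := by
          rw [hU_def]
          calc |((n:ℝ) + 1) * sbj n y - y * sbj (n + 1) y|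
              ≤ |((n:ℝ) + 1) * sbj n y| + |y * sbj (n + 1) y| := abs_sub _ _
            _ = ((n:ℝ) + 1) * |sbj n y| + y * |sbj (n + 1) y| := by
                rw [abs_mul, abs_mul, abs_of_pos hy.1,
                  abs_of_nonneg (by positivity : (0:ℝ) ≤ (n:ℝ) + 1)]
            _ ≤ ((n:ℝ) + 1) * y + y := by
                have e1 : |sbj n y| ≤ y := h1.trans hyn
                have e2 : |sbj (n + 1) y| ≤ 1 := h2.trans hyn1
                have hn0 : (0:ℝ) ≤ (n:ℝ) + 1 := by positivity
                have t1 := mul_le_mul_of_nonneg_left e1 hn0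
                have t2 := mul_le_mul_of_nonneg_left e2 hy.1.le
                linarith
        have huy : |u y| ≤ y := by
          rw [hu_def]
          simp only [abs_mul, abs_of_pos hy.1]
          have := mul_le_mul_of_nonneg_left (h1.trans (hyn.trans hy.2)) hy.1.le
          linarith
        have hWy : |W y| ≤ |U y| + ε * |u y| := by
          rw [hWdef]
          calc |U y * Real.cos (ε * y) + ε * (u y * Real.sin (ε * y))|
              ≤ |U y * Real.cos (ε * y)| + |ε * (u y * Real.sin (ε * y))| := abs_add_le _ _
            _ = |U y| * |Real.cos (ε * y)| + ε * (|u y| * |Real.sin (ε * y)|) := by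
                rw [abs_mul, abs_mul, abs_mul, abs_of_pos hε0]
            _ ≤ |U y| + ε * |u y| := by
                have t1 := mul_le_mul_of_nonneg_left (Real.abs_cos_le_one (ε * y)) (abs_nonneg (U y))
                have t2 := mul_le_mul_of_nonneg_left (Real.abs_sin_le_one (ε * y)) (abs_nonneg (u y))
                have t3 := mul_le_mul_of_nonneg_left t2 hε0.le
                nlinarith [t1, t3]
        rw [Real.norm_eq_abs]
        have hεy : ε * |u y| ≤ ε * y := mul_le_mul_of_nonneg_left huy hε0.le
        calc |W y| ≤ |U y| + ε * |u y| := hWy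
          _ ≤ (((n:ℝ) + 1) * y + y) + ε * y := by linarith
          _ = ((n:ℝ) + 2 + ε) * y := by ring
      have hg : Tendsto (fun y : ℝ => ((n:ℝ) + 2 + ε) * y) (𝓝[>] (0:ℝ)) (𝓝 0) := by
        have h' : Tendsto (fun y : ℝ => ((n:ℝ) + 2 + ε) * y) (𝓝 (0:ℝ))
            (𝓝 (((n:ℝ) + 2 + ε) * 0)) := (continuous_const.mul continuous_id).tendsto 0
        simpa using h'.mono_left nhdsWithin_le_nhds
      exact squeeze_zero_norm' hbound hg
    -- conclusion
    have hc2 : c / 2 ∈ Ioc (0:ℝ) c := ⟨half_pos hc_pos, by linarith⟩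
    have hcc : c ∈ Ioc (0:ℝ) c := ⟨hc_pos, le_refl c⟩
    have h5 : W (c / 2) < W c := hmono hc2 hcc (by linarith)
    have h6 : 0 ≤ W (c / 2) := by
      apply le_of_tendsto hWlim
      filter_upwards [Ioo_mem_nhdsGT_of_mem
        (show (0:ℝ) ∈ Ico (0:ℝ) (c / 2) from ⟨le_refl _, half_pos hc_pos⟩)] with y hy
      exact (hmono ⟨hy.1, le_trans hy.2.le hc2.2⟩ hc2 hy.2).le
    have h7 : W c ≤ 0 := by
      have hcos := hcos_pos c hc_pos (le_refl c)
      rw [hWdef]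
      simp only [huc0, zero_mul, mul_zero, add_zero]
      exact mul_nonpos_of_nonpos_of_nonneg hUc hcos.le
    linarith


end SbjAux

/-- `jₙ(x) > 0` for `0 < x ≤ n + 1/2`; consequently every positive zero
of `jₙ` is strictly greater than `n + 1/2`. -/
theorem sbj_pos_of_le_turning_point :
    (∀ (n : ℕ) (x : ℝ), 0 < x → x ≤ (n : ℝ) + 1 / 2 → 0 < sbj n x)
    ∧ ∀ (n : ℕ) (x : ℝ), 0 < x → sbj n x = 0 → (n : ℝ) + 1 / 2 < x := by
  refine ⟨sbj_main, fun n x hx h0 => ?_⟩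
  by_contra hle
  push_neg at hle
  exact absurd h0 (ne_of_gt (sbj_main n x hx hle))

end
end

section
/- For every n ≥ 1 and all k > 0, ε₀ > 0, R > 0, the following identity holds: j_n(k ε₀ R) · (1/R) · d/dρ[ρ j_n(kρ)]|_{ρ=R} − j_n(kR) · (1/R) · d/dρ[ρ j_n(k ε₀ ρ)]|_{ρ=R} = k (ε₀ j_n(kR) j_{n+1}(k ε₀ R) − j_{n+1}(kR) j_n(k ε₀ R)). -/
open Real Filter Set

noncomputable section

lemma sbj_hasDerivAt : ∀ (n : ℕ) (x : ℝ), x ≠ 0 →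
    HasDerivAt (sbj n) ((n / x) * sbj n x - sbj (n + 1) x) x := by
  intro n
  induction n using Nat.twoStepInduction with
  | zero =>
    intro x hx
    have h : HasDerivAt (fun x => Real.sin x / x)
        ((Real.cos x * x - Real.sin x * 1) / x ^ 2) x :=
      (Real.hasDerivAt_sin x).div (hasDerivAt_id x) hx
    convert h using 1
    · rfl
    show ((0:ℕ):ℝ) / x * sbj 0 x - sbj (0 + 1) x = _
    simp only [sbj.eq_1, sbj.eq_2, zero_add]
    field_simp
    ring
  | one =>
    intro x hx
    have h1 : HasDerivAt (fun x => Real.sin x / x ^ 2)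
        ((Real.cos x * x ^ 2 - Real.sin x * (2 * x)) / (x ^ 2) ^ 2) x := by
      have := (Real.hasDerivAt_sin x).div ((hasDerivAt_pow 2 x)) (pow_ne_zero 2 hx)
      simp at this; exact this
    have h2 : HasDerivAt (fun x => Real.cos x / x)
        (((-Real.sin x) * x - Real.cos x * 1) / x ^ 2) x :=
      (Real.hasDerivAt_cos x).div (hasDerivAt_id x) hx
    have h : HasDerivAt (fun x => Real.sin x / x ^ 2 - Real.cos x / x) _ x := h1.sub h2
    convert h using 1
    · rfl
    show ((1:ℕ):ℝ) / x * sbj 1 x - sbj (1 + 1) x = _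
    simp only [sbj, Nat.cast_one, Nat.cast_ofNat]
    norm_num
    field_simp
    ring
  | more n ih0 ih1 =>
    intro x hx
    have hc : HasDerivAt (fun x : ℝ => (2 * (n + 1 : ℝ) + 1) / x)
        (-(2 * (n + 1 : ℝ) + 1) / x ^ 2) x := by
      have : HasDerivAt (fun x : ℝ => (2 * (n + 1 : ℝ) + 1) / x)
          ((0 * x - (2 * (n + 1 : ℝ) + 1) * 1) / x ^ 2) x := (hasDerivAt_const x (2 * (n + 1 : ℝ) + 1)).div (hasDerivAt_id x) hx
      convert this using 1
      ring
    have h := (hc.mul (ih1 x hx)).sub (ih0 x hx)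
    have heq : HasDerivAt (sbj (n + 2))
        (-(2 * (n + 1 : ℝ) + 1) / x ^ 2 * sbj (n + 1) x +
          (2 * (n + 1 : ℝ) + 1) / x * (((n + 1 : ℕ) / x) * sbj (n + 1) x - sbj (n + 1 + 1) x)
          - (((n : ℕ) / x) * sbj n x - sbj (n + 1) x)) x := by
      have : sbj (n + 2) = fun x => ((2 * (n + 1 : ℝ) + 1) / x) * sbj (n + 1) x - sbj n x := by
        rfl
      rw [this]
      exact h
    convert heq using 1
    show ((n + 2 : ℕ) / x) * sbj (n + 2) x - sbj (n + 3) x = _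
    have e3 : sbj (n + 3) x = ((2 * ((n : ℝ) + 1 + 1) + 1) / x) * sbj (n + 2) x - sbj (n + 1) x := by
      show sbj (n + 1 + 2) x = _
      rw [sbj]
      push_cast; ring
    have e2 : sbj (n + 2) x = ((2 * (n + 1 : ℝ) + 1) / x) * sbj (n + 1) x - sbj n x := by
      rw [sbj]
    rw [e3, e2]
    push_cast
    field_simp
    ring


/-- the determinant defining the TE eigenvalue condition reduces, via the
recurrence relations for spherical Bessel functions, to
`k (ε₀ jₙ(kR) j_{n+1}(kε₀R) - j_{n+1}(kR) jₙ(kε₀R))`. -/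
theorem fTE_eq_wronskian
    (n : ℕ) (hn : 1 ≤ n) (k ε₀ R : ℝ) (hk : 0 < k) (hε₀ : 0 < ε₀) (hR : 0 < R) :
    sbj n (k * ε₀ * R) * (1 / R) * deriv (fun ρ : ℝ => ρ * sbj n (k * ρ)) R
      - sbj n (k * R) * (1 / R) * deriv (fun ρ : ℝ => ρ * sbj n (k * ε₀ * ρ)) R
    = k * (ε₀ * sbj n (k * R) * sbj (n + 1) (k * ε₀ * R)
            - sbj (n + 1) (k * R) * sbj n (k * ε₀ * R)) := by
  have key : ∀ c : ℝ, 0 < c →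
      deriv (fun ρ : ℝ => ρ * sbj n (c * ρ)) R
        = sbj n (c * R) + R * (((n / (c * R)) * sbj n (c * R) - sbj (n + 1) (c * R)) * c) := by
    intro c hc
    have hcR : (c * R) ≠ 0 := by positivity
    have hinner : HasDerivAt (fun ρ : ℝ => sbj n (c * ρ))
        (((n / (c * R)) * sbj n (c * R) - sbj (n + 1) (c * R)) * c) R := by
      have := (sbj_hasDerivAt n (c * R) hcR).comp R ((hasDerivAt_id R).const_mul c)
      simp at this; exact this
    have h := ((hasDerivAt_id R).mul hinner)
    have := h.deriv; simp at this; exact this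
  rw [key k hk, key (k * ε₀) (by positivity)]
  have h1 : k * ε₀ * R = k * (ε₀ * R) := by ring
  field_simp
  ring

end
end

section
/- Let ε₀ > 1, R > 0, and let 0 < γ₁ < γ₂ < 1. For each n ∈ ℕ let (r_{n,s})_{s≥1} be the increasing enumeration of the positive zeros of the spherical Bessel function j_n, and suppose (k_n) is a sequence of positive reals with k_n ∈ (r_{n,s₁(n)}/R, r_{n,s₂(n)}/R) for all sufficiently large n, where s₁(n) = ⌊(n + 1/2)^{γ₁}⌋ and s₂(n) = ⌊(n + 1/2)^{γ₂}⌋. Then for every τ ∈ (R/ε₀, R), liminf_{n→∞} (∫₀^τ j_n(k_n ε₀ ρ)² ρ² dρ) / (∫₀^R j_n(k_n ε₀ ρ)² ρ² dρ) > 0. -/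
open Real Filter Set

noncomputable section

set_option maxHeartbeats 1000000

-- ==== auxiliary development ====

noncomputable def g : ℕ → ℝ → ℝ
  | 0 => Real.sin
  | 1 => fun x => Real.sin x - x * Real.cos x
  | n + 2 => fun x => (2 * (n : ℝ) + 3) * g (n + 1) x - x ^ 2 * g n x

lemma g_zero : ∀ n, g n 0 = 0 := by
  have h : ∀ n, g n 0 = 0 ∧ g (n + 1) 0 = 0 := by
    intro n
    induction n with
    | zero => constructor <;> simp [g]
    | succ m ih => exact ⟨ih.2, by simp [g, ih.1, ih.2]⟩
  exact fun n => (h n).1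

lemma g_one_deriv : ∀ x, HasDerivAt (g 1) (x * g 0 x) x := by
  intro x
  have h1 : HasDerivAt (fun x : ℝ => Real.sin x - x * Real.cos x)
      (Real.cos x - (1 * Real.cos x + x * (-Real.sin x))) x :=
    (Real.hasDerivAt_sin x).sub ((hasDerivAt_id x).mul (Real.hasDerivAt_cos x))
  have he : Real.cos x - (1 * Real.cos x + x * (-Real.sin x)) = x * g 0 x := by
    simp only [g]; ring
  rw [he] at h1
  exact h1

lemma g_deriv : ∀ n x, HasDerivAt (g (n + 1)) (x * g n x) x := by
  have h : ∀ n, (∀ x, HasDerivAt (g (n + 1)) (x * g n x) x) ∧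
      (∀ x, HasDerivAt (g (n + 2)) (x * g (n + 1) x) x) := by
    intro n
    induction n with
    | zero =>
      refine ⟨g_one_deriv, ?_⟩
      intro x
      show HasDerivAt (fun x : ℝ => (2 * ((0:ℕ) : ℝ) + 3) * g 1 x - x ^ 2 * g 0 x) (x * g 1 x) x
      have hx2 : HasDerivAt (fun x : ℝ => x ^ 2 * g 0 x)
          ((2:ℕ) * x ^ 1 * g 0 x + x ^ 2 * Real.cos x) x :=
        (hasDerivAt_pow 2 x).mul (Real.hasDerivAt_sin x)
      have h1 := ((g_one_deriv x).const_mul ((2 : ℝ) * ((0:ℕ):ℝ) + 3)).sub hx2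
      have he : (2 * ((0:ℕ):ℝ) + 3) * (x * g 0 x) - ((2:ℕ) * x ^ 1 * g 0 x + x ^ 2 * Real.cos x)
          = x * g 1 x := by
        simp only [g]; push_cast; ring
      rw [he] at h1
      exact h1
    | succ m ih =>
      refine ⟨ih.2, ?_⟩
      intro x
      show HasDerivAt
        (fun x : ℝ => (2 * ((m+1:ℕ) : ℝ) + 3) * g (m + 2) x - x ^ 2 * g (m + 1) x)
        (x * g (m + 2) x) x
      have hx2 : HasDerivAt (fun x : ℝ => x ^ 2 * g (m + 1) x)
          ((2:ℕ) * x ^ 1 * g (m + 1) x + x ^ 2 * (x * g m x)) x :=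
        (hasDerivAt_pow 2 x).mul (ih.1 x)
      have h1 := ((ih.2 x).const_mul ((2 : ℝ) * ((m+1:ℕ):ℝ) + 3)).sub hx2
      have he : (2 * ((m+1:ℕ):ℝ) + 3) * (x * g (m + 1) x)
            - ((2:ℕ) * x ^ 1 * g (m + 1) x + x ^ 2 * (x * g m x))
          = x * g (m + 2) x := by
        show _ = x * ((2 * ((m:ℕ) : ℝ) + 3) * g (m + 1) x - x ^ 2 * g m x)
        push_cast; ring
      rw [he] at h1
      exact h1
  exact fun n => (h n).1

lemma g_continuous (n : ℕ) : Continuous (g n) := by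
  cases n with
  | zero => exact Real.continuous_sin
  | succ m => exact (Differentiable.continuous (fun x => (g_deriv m x).differentiableAt))
    
lemma g_int (n : ℕ) (x : ℝ) : g (n + 1) x = ∫ t in (0:ℝ)..x, t * g n t := by
  have h := intervalIntegral.integral_eq_sub_of_hasDerivAt
    (f := g (n+1)) (f' := fun t => t * g n t) (a := 0) (b := x)
    (fun t _ => g_deriv n t)
    ((continuous_id.mul (g_continuous n)).intervalIntegrable 0 x)
  rw [h, g_zero]
  ring

lemma g_pos : ∀ n, ∀ x, 0 < x → x < π → 0 < g n x := by
  intro n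
  induction n with
  | zero => exact fun x hx hx' => Real.sin_pos_of_pos_of_lt_pi hx hx'
  | succ m ih =>
    intro x hx hx'
    rw [g_int m x]
    apply intervalIntegral.intervalIntegral_pos_of_pos_on
    · exact (continuous_id.mul (g_continuous m)).intervalIntegrable 0 x
    · intro t ht
      exact mul_pos ht.1 (ih t ht.1 (ht.2.trans hx'))
    · exact hx

lemma g_bd : ∀ n, ∀ x, 0 ≤ x → x ≤ 1 → |g n x| ≤ x ^ (n + 1) := by
  intro n
  induction n with
  | zero =>
    intro x hx hx'
    show |Real.sin x| ≤ x ^ 1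
    rw [abs_of_nonneg (Real.sin_nonneg_of_nonneg_of_le_pi hx
      (hx'.trans (by linarith [Real.pi_gt_three])))]
    simpa using Real.sin_le hx
  | succ m ih =>
    intro x hx hx'
    rw [g_int m x]
    have h2 : ∫ t in (0:ℝ)..x, t ^ (m + 2) = x ^ (m + 3) / (m + 3) := by
      rw [integral_pow]; push_cast; ring_nf
    calc |∫ t in (0:ℝ)..x, t * g m t| ≤ ∫ t in (0:ℝ)..x, |t * g m t| :=
          intervalIntegral.abs_integral_le_integral_abs hx
      _ ≤ ∫ t in (0:ℝ)..x, t ^ (m + 2) := by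
          apply intervalIntegral.integral_mono_on hx
          · exact ((continuous_id.mul (g_continuous m)).abs).intervalIntegrable 0 x
          · exact (continuous_pow _).intervalIntegrable 0 x
          · intro t ht
            rw [abs_mul, abs_of_nonneg ht.1, pow_succ' t (m+1)]
            exact mul_le_mul_of_nonneg_left (ih t ht.1 (ht.2.trans hx')) ht.1
      _ = x ^ (m + 3) / (m + 3) := h2
      _ ≤ x ^ (m + 2) := by
          have h3 : x ^ (m + 3) ≤ x ^ (m + 2) := pow_le_pow_of_le_one hx hx' (by omega)
          have : (1:ℝ) ≤ (m:ℝ) + 3 := by linarith [Nat.cast_nonneg (α := ℝ) m]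
          calc x ^ (m + 3) / ((m:ℝ) + 3) ≤ x ^ (m + 3) / 1 := by
                apply div_le_div_of_nonneg_left (by positivity) one_pos this
            _ = x ^ (m + 3) := by ring
            _ ≤ x ^ (m + 2) := h3

lemma sbj_eq_g : ∀ n, ∀ x : ℝ, x ≠ 0 → sbj n x = g n x / x ^ (n + 1) := by
  have key : ∀ n, (∀ x : ℝ, x ≠ 0 → sbj n x = g n x / x ^ (n + 1)) ∧
      (∀ x : ℝ, x ≠ 0 → sbj (n+1) x = g (n+1) x / x ^ (n + 2)) := by
    intro n
    induction n with
    | zero =>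
      constructor
      · intro x hx; simp [sbj, g]
      · intro x hx; show Real.sin x / x ^ 2 - Real.cos x / x = _
        simp only [g]; field_simp; ring
    | succ m ih =>
      refine ⟨ih.2, ?_⟩
      intro x hx
      show ((2 * ((m:ℝ) + 1) + 1) / x) * sbj (m + 1) x - sbj m x = _
      rw [ih.2 x hx, ih.1 x hx]
      show _ = ((2 * ((m:ℕ):ℝ) + 3) * g (m + 1) x - x ^ 2 * g m x) / x ^ (m + 3)
      field_simp
      ring
  exact fun n => (key n).1

lemma sbj_pos (n : ℕ) (x : ℝ) (hx : 0 < x) (hx' : x < π) : 0 < sbj n x := by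
  rw [sbj_eq_g n x hx.ne']
  exact div_pos (g_pos n x hx hx') (by positivity)

lemma sbj_bd (n : ℕ) (x : ℝ) (hx : 0 < x) (hx' : x ≤ 1) : |x * sbj n x| ≤ x := by
  rw [sbj_eq_g n x hx.ne']
  have h1 : |x * (g n x / x ^ (n+1))| = |g n x| / x ^ n := by
    rw [abs_mul, abs_div, abs_of_nonneg hx.le, abs_of_nonneg (by positivity : (0:ℝ) ≤ x ^ (n+1)),
      pow_succ]
    rw [eq_div_iff (by positivity : (x:ℝ) ^ n ≠ 0)]
    field_simp
  rw [h1]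
  rw [div_le_iff₀ (by positivity)]
  calc |g n x| ≤ x ^ (n + 1) := g_bd n x hx.le hx'
    _ = x * x ^ n := by rw [pow_succ]; ring

lemma sbj_succ_hasDerivAt (n : ℕ) (x : ℝ) (hx : x ≠ 0) :
    HasDerivAt (sbj (n + 1)) (sbj n x - ((n : ℝ) + 2) / x * sbj (n + 1) x) x := by
  have h1 : HasDerivAt (fun y : ℝ => g (n + 1) y / y ^ (n + 2))
      ((x * g n x * x ^ (n + 2) - g (n + 1) x * (((n:ℕ) + 2 : ℕ) * x ^ (n + 1))) /
        (x ^ (n + 2)) ^ 2) x := by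
    have := (g_deriv n x).fun_div (hasDerivAt_pow (n + 2) x) (pow_ne_zero _ hx)
    simpa using this
  have he : (fun y : ℝ => g (n + 1) y / y ^ (n + 2)) =ᶠ[nhds x] sbj (n + 1) := by
    filter_upwards [eventually_ne_nhds hx] with y hy
    exact (sbj_eq_g (n + 1) y hy).symm
  have h2 := h1.congr_of_eventuallyEq he.symm
  have hval : (x * g n x * x ^ (n + 2) - g (n + 1) x * (((n:ℕ) + 2 : ℕ) * x ^ (n + 1))) /
        (x ^ (n + 2)) ^ 2 = sbj n x - ((n : ℝ) + 2) / x * sbj (n + 1) x := by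
    rw [sbj_eq_g n x hx, sbj_eq_g (n + 1) x hx]
    field_simp
    push_cast
    ring
  rw [hval] at h2
  exact h2

lemma sbj_deriv (n : ℕ) (x : ℝ) (hx : x ≠ 0) :
    HasDerivAt (sbj n) ((n : ℝ) / x * sbj n x - sbj (n + 1) x) x := by
  cases n with
  | zero =>
    have h1 : HasDerivAt (fun y : ℝ => Real.sin y / y)
        ((Real.cos x * x - Real.sin x * 1) / x ^ 2) x :=
      (Real.hasDerivAt_sin x).div (hasDerivAt_id x) hx
    have h2 : HasDerivAt (sbj 0) ((Real.cos x * x - Real.sin x * 1) / x ^ 2) x := h1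
    have hval : (Real.cos x * x - Real.sin x * 1) / x ^ 2
        = ((0:ℕ) : ℝ) / x * sbj 0 x - sbj 1 x := by
      show _ = _ - (Real.sin x / x ^ 2 - Real.cos x / x)
      field_simp
      ring
    rw [hval] at h2
    exact h2
  | succ m =>
    have h2 := sbj_succ_hasDerivAt m x hx
    have hval : sbj m x - ((m : ℝ) + 2) / x * sbj (m + 1) x
        = ((m + 1 : ℕ) : ℝ) / x * sbj (m + 1) x - sbj (m + 2) x := by
      show _ = _ - (((2 * ((m : ℝ) + 1) + 1) / x) * sbj (m + 1) x - sbj m x)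
      push_cast
      field_simp
      ring
    rw [hval] at h2
    exact h2

lemma U_hasDerivAt (n : ℕ) (κ ρ : ℝ) (hκ : κ ≠ 0) (hρ : ρ ≠ 0) :
    HasDerivAt (fun y => y * sbj n (κ * y))
      (((n : ℝ) + 1) * sbj n (κ * ρ) - κ * ρ * sbj (n + 1) (κ * ρ)) ρ := by
  have hκρ : κ * ρ ≠ 0 := mul_ne_zero hκ hρ
  have hc : HasDerivAt (fun y : ℝ => sbj n (κ * y))
      (((n : ℝ) / (κ * ρ) * sbj n (κ * ρ) - sbj (n + 1) (κ * ρ)) * κ) ρ := by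
    have hlin : HasDerivAt (fun y : ℝ => κ * y) κ ρ := by
      simpa using (hasDerivAt_id ρ).const_mul κ
    exact (sbj_deriv n (κ * ρ) hκρ).comp ρ hlin
  have h := (hasDerivAt_id ρ).mul hc
  simp only [id] at h
  have hval : 1 * sbj n (κ * ρ) + ρ * (((n : ℝ) / (κ * ρ) * sbj n (κ * ρ) - sbj (n + 1) (κ * ρ)) * κ)
      = ((n : ℝ) + 1) * sbj n (κ * ρ) - κ * ρ * sbj (n + 1) (κ * ρ) := by
    field_simp
    ring
  rw [hval] at h
  exact h

lemma V_hasDerivAt (n : ℕ) (κ ρ : ℝ) (hκ : κ ≠ 0) (hρ : ρ ≠ 0) :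
    HasDerivAt (fun y => ((n : ℝ) + 1) * sbj n (κ * y) - κ * y * sbj (n + 1) (κ * y))
      (((n : ℝ) * ((n : ℝ) + 1) / ρ ^ 2 - κ ^ 2) * (ρ * sbj n (κ * ρ))) ρ := by
  have hκρ : κ * ρ ≠ 0 := mul_ne_zero hκ hρ
  have hlin : HasDerivAt (fun y : ℝ => κ * y) κ ρ := by
    simpa using (hasDerivAt_id ρ).const_mul κ
  have hc1 : HasDerivAt (fun y : ℝ => sbj n (κ * y))
      (((n : ℝ) / (κ * ρ) * sbj n (κ * ρ) - sbj (n + 1) (κ * ρ)) * κ) ρ :=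
    (sbj_deriv n (κ * ρ) hκρ).comp ρ hlin
  have hc2 : HasDerivAt (fun y : ℝ => sbj (n + 1) (κ * y))
      (((((n:ℕ) + 1 : ℕ) : ℝ) / (κ * ρ) * sbj (n + 1) (κ * ρ) - sbj (n + 2) (κ * ρ)) * κ) ρ :=
    (sbj_deriv (n + 1) (κ * ρ) hκρ).comp ρ hlin
  have h := (hc1.const_mul ((n : ℝ) + 1)).sub ((hlin.mul (by exact hc2)))
  have hrec : sbj (n + 2) (κ * ρ) =
      (2 * ((n : ℝ) + 1) + 1) / (κ * ρ) * sbj (n + 1) (κ * ρ) - sbj n (κ * ρ) := rfl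
  have hval : ((n : ℝ) + 1) * (((n : ℝ) / (κ * ρ) * sbj n (κ * ρ) - sbj (n + 1) (κ * ρ)) * κ)
      - (κ * sbj (n + 1) (κ * ρ) + κ * ρ *
          (((((n:ℕ) + 1 : ℕ) : ℝ) / (κ * ρ) * sbj (n + 1) (κ * ρ) - sbj (n + 2) (κ * ρ)) * κ))
      = ((n : ℝ) * ((n : ℝ) + 1) / ρ ^ 2 - κ ^ 2) * (ρ * sbj n (κ * ρ)) := by
    rw [hrec]
    push_cast
    field_simp
    ring
  rw [hval] at h
  exact h
lemma u_hasDerivAt (n : ℕ) (ρ : ℝ) (hρ : ρ ≠ 0) :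
    HasDerivAt (fun y => y * sbj n y)
      (((n : ℝ) + 1) * sbj n ρ - ρ * sbj (n + 1) ρ) ρ := by
  have := U_hasDerivAt n 1 ρ one_ne_zero hρ
  simpa using this

lemma v_hasDerivAt (n : ℕ) (ρ : ℝ) (hρ : ρ ≠ 0) :
    HasDerivAt (fun y => ((n : ℝ) + 1) * sbj n y - y * sbj (n + 1) y)
      (((n : ℝ) * ((n : ℝ) + 1) / ρ ^ 2 - 1) * (ρ * sbj n ρ)) ρ := by
  have := V_hasDerivAt n 1 ρ one_ne_zero hρ
  simpa using this

/-- `jₙ > 0` on `(0, √(n(n+1))]` (and on `(0,π)`): key lower bound for the first zero. -/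
lemma sbj_pos_of_sq_le (n : ℕ) (x : ℝ) (hx : 0 < x) (hsq : x ^ 2 ≤ (n : ℝ) * ((n : ℝ) + 1)) :
    0 < sbj n x := by
  by_contra hneg
  push_neg at hneg
  set u : ℝ → ℝ := fun y => y * sbj n y with hu_def
  have hux : u x ≤ 0 := mul_nonpos_of_nonneg_of_nonpos hx.le hneg
  have hπx : π ≤ x := by
    by_contra h
    push_neg at h
    exact absurd (sbj_pos n x hx h) (not_lt.2 hneg)
  have hπ2 : (0:ℝ) < π / 2 := by positivity
  have hucont : ∀ y : ℝ, y ≠ 0 → ContinuousAt u y := fun y hy =>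
    (u_hasDerivAt n y hy).continuousAt
  have hcontIcc : ∀ a b : ℝ, 0 < a → ContinuousOn u (Icc a b) := by
    intro a b ha
    exact fun y hy => (hucont y (by intro h; rw [h] at hy; linarith [hy.1])).continuousWithinAt
  have hupos : ∀ y : ℝ, 0 < y → y < π → 0 < u y := fun y hy hy' =>
    mul_pos hy (sbj_pos n y hy hy')
  -- find a zero of u in [π/2, x]
  have hπ2x : π / 2 ≤ x := by linarith [Real.pi_pos]
  have hS : ∃ c ∈ Icc (π/2) x, u c = 0 := by
    have := intermediate_value_Icc' hπ2x (hcontIcc _ _ hπ2)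
    have h0 : (0:ℝ) ∈ Icc (u x) (u (π/2)) :=
      ⟨hux, (hupos _ hπ2 (by linarith [Real.pi_pos])).le⟩
    obtain ⟨c, hc, hc0⟩ := this h0
    exact ⟨c, hc, hc0⟩
  set S : Set ℝ := {y | y ∈ Icc (π/2) x ∧ u y = 0} with hS_def
  have hScomp : IsCompact S := by
    have hclosed : IsClosed S := by
      have : S = Icc (π/2) x ∩ u ⁻¹' {0} := by
        ext y; simp [hS_def]
      rw [this]
      exact (hcontIcc _ _ hπ2).preimage_isClosed_of_isClosed isClosed_Icc isClosed_singleton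
    exact isCompact_Icc.of_isClosed_subset hclosed (fun y hy => hy.1)
  have hSne : S.Nonempty := by
    obtain ⟨c, hc, hc0⟩ := hS
    exact ⟨c, hc, hc0⟩
  set z := sInf S with hz_def
  have hzS : z ∈ S := hScomp.sInf_mem hSne
  have hz0 : (0:ℝ) < z := lt_of_lt_of_le hπ2 hzS.1.1
  have hzx : z ≤ x := hzS.1.2
  have huz : u z = 0 := hzS.2
  -- u > 0 on (0, z)
  have hupos' : ∀ y : ℝ, 0 < y → y < z → 0 < u y := by
    intro y hy hyz
    rcases lt_or_ge y π with h | h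
    · exact hupos y hy h
    · -- y ∈ [π, z); no zero below z in [π/2, x], and u(π/2) > 0
      by_contra hle
      push_neg at hle
      have h2y : π / 2 ≤ y := by linarith [Real.pi_pos]
      obtain ⟨c, hc, hc0⟩ := intermediate_value_Icc' h2y (hcontIcc _ _ hπ2)
        ⟨hle, (hupos _ hπ2 (by linarith [Real.pi_pos])).le⟩
      have hcS : c ∈ S := ⟨⟨hc.1, by linarith [hc.2]⟩, hc0⟩
      have := csInf_le hScomp.bddBelow hcS
      have : z ≤ y := le_trans this hc.2
      linarith
  -- u is convex on Ioc 0 z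
  have hconv : ConvexOn ℝ (Ioc 0 z) u := by
    apply convexOn_of_hasDerivWithinAt2_nonneg (convex_Ioc 0 z)
      (f' := fun y => ((n : ℝ) + 1) * sbj n y - y * sbj (n + 1) y)
      (f'' := fun y => ((n : ℝ) * ((n : ℝ) + 1) / y ^ 2 - 1) * (y * sbj n y))
    · intro y hy
      exact (hucont y hy.1.ne').continuousWithinAt
    · intro y hy
      rw [interior_Ioc] at hy
      exact (u_hasDerivAt n y hy.1.ne').hasDerivWithinAt
    · intro y hy
      rw [interior_Ioc] at hy
      exact (v_hasDerivAt n y hy.1.ne').hasDerivWithinAt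
    · intro y hy
      rw [interior_Ioc] at hy
      have hy0 := hy.1
      have hyz := hy.2
      have hW : 0 ≤ (n : ℝ) * ((n : ℝ) + 1) / y ^ 2 - 1 := by
        rw [sub_nonneg, le_div_iff₀ (by positivity)]
        have : y ^ 2 ≤ x ^ 2 := by nlinarith
        nlinarith
      exact mul_nonneg hW (hupos' y hy0 hyz).le
  -- contradiction: convexity forces u ≤ 0 at z/2
  have hmid : 0 < u (z/2) := hupos' (z/2) (by linarith) (by linarith)
  set ε := min 1 (min (z/2) (u (z/2))) / 2 with hε_def
  have hε0 : 0 < ε := by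
    apply div_pos _ two_pos
    exact lt_min one_pos (lt_min (by linarith) hmid)
  have hε1 : ε ≤ 1 / 2 := by
    apply div_le_div_of_nonneg_right (min_le_left _ _) (by norm_num)
  have hεz : ε < z / 2 := by
    have : ε ≤ (z/2) / 2 := by
      apply div_le_div_of_nonneg_right ((min_le_right _ _).trans (min_le_left _ _)) (by norm_num)
    linarith
  have hεu : ε ≤ u (z/2) / 2 := by
    apply div_le_div_of_nonneg_right ((min_le_right _ _).trans (min_le_right _ _)) (by norm_num)
  set lam := (z/2) / (z - ε) with hlam_def
  have hzε : 0 < z - ε := by linarith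
  have hlam0 : 0 ≤ lam := by positivity
  have hlam1 : lam ≤ 1 := by
    rw [hlam_def, div_le_one hzε]; linarith
  have hcomb : lam * ε + (1 - lam) * z = z / 2 := by
    have h1 : lam * (z - ε) = z / 2 := div_mul_cancel₀ _ hzε.ne'
    calc lam * ε + (1 - lam) * z = z - lam * (z - ε) := by ring
      _ = z / 2 := by rw [h1]; ring
  have hb : (0:ℝ) ≤ 1 - lam := by linarith
  have hab : lam + (1 - lam) = 1 := by ring
  have hkey := hconv.2 ⟨hε0, (by linarith : ε ≤ z)⟩ ⟨hz0, le_refl z⟩ hlam0 hb hab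
  simp only [smul_eq_mul] at hkey
  rw [hcomb, huz] at hkey
  have huε : u ε ≤ ε := by
    have := sbj_bd n ε hε0 (by linarith)
    calc u ε ≤ |u ε| := le_abs_self _
      _ ≤ ε := this
  have : u (z/2) ≤ ε := by
    calc u (z/2) ≤ lam * u ε + (1 - lam) * 0 := hkey
      _ = lam * u ε := by ring
      _ ≤ lam * ε := mul_le_mul_of_nonneg_left huε hlam0
      _ ≤ 1 * ε := mul_le_mul_of_nonneg_right hlam1 hε0.le
      _ = ε := one_mul ε
  linarith
noncomputable def Uf (n : ℕ) (κ : ℝ) : ℝ → ℝ := fun ρ => ρ * sbj n (κ * ρ)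
noncomputable def Vf (n : ℕ) (κ : ℝ) : ℝ → ℝ :=
  fun ρ => ((n : ℝ) + 1) * sbj n (κ * ρ) - κ * ρ * sbj (n + 1) (κ * ρ)
noncomputable def qf (n : ℕ) (κ : ℝ) : ℝ → ℝ :=
  fun ρ => κ ^ 2 - (n : ℝ) * ((n : ℝ) + 1) / ρ ^ 2
noncomputable def Ef (n : ℕ) (κ : ℝ) : ℝ → ℝ :=
  fun ρ => (Vf n κ ρ) ^ 2 / (qf n κ ρ) + (Uf n κ ρ) ^ 2

variable {n : ℕ} {κ ρ : ℝ}

lemma Uf_deriv (hκ : κ ≠ 0) (hρ : ρ ≠ 0) : HasDerivAt (Uf n κ) (Vf n κ ρ) ρ :=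
  U_hasDerivAt n κ ρ hκ hρ

lemma Vf_deriv (hκ : κ ≠ 0) (hρ : ρ ≠ 0) :
    HasDerivAt (Vf n κ) (-(qf n κ ρ) * Uf n κ ρ) ρ := by
  have h := V_hasDerivAt n κ ρ hκ hρ
  have : ((n : ℝ) * ((n : ℝ) + 1) / ρ ^ 2 - κ ^ 2) * (ρ * sbj n (κ * ρ))
      = -(qf n κ ρ) * Uf n κ ρ := by
    simp only [qf, Uf]; ring
  rw [this] at h
  exact h

lemma qf_deriv (hρ : ρ ≠ 0) :
    HasDerivAt (qf n κ) (2 * ((n : ℝ) * ((n : ℝ) + 1)) / ρ ^ 3 ) ρ := by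
  have h : HasDerivAt (fun y : ℝ => κ ^ 2 - (n : ℝ) * ((n : ℝ) + 1) / y ^ 2)
      ((0 : ℝ) - ((0 : ℝ) * ρ ^ 2 - (n : ℝ) * ((n : ℝ) + 1) * (((2:ℕ):ℝ) * ρ ^ (2 - 1))) / (ρ ^ 2) ^ 2) ρ :=
    (hasDerivAt_const ρ ((κ:ℝ)^2)).sub
      (((hasDerivAt_const ρ ((n : ℝ) * ((n : ℝ) + 1))).div (hasDerivAt_pow 2 ρ)
        (pow_ne_zero 2 hρ)))
  have he : (0 : ℝ) - ((0 : ℝ) * ρ ^ 2 - (n : ℝ) * ((n : ℝ) + 1) * (((2:ℕ):ℝ) * ρ ^ (2 - 1))) / (ρ ^ 2) ^ 2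
      = 2 * ((n : ℝ) * ((n : ℝ) + 1)) / ρ ^ 3 := by
    field_simp
    ring
  rw [he] at h
  exact h

lemma Uf_cont (hκ : κ ≠ 0) {s : Set ℝ} (hs : ∀ y ∈ s, y ≠ 0) : ContinuousOn (Uf n κ) s :=
  fun y hy => (Uf_deriv hκ (hs y hy)).continuousAt.continuousWithinAt

lemma Vf_cont (hκ : κ ≠ 0) {s : Set ℝ} (hs : ∀ y ∈ s, y ≠ 0) : ContinuousOn (Vf n κ) s :=
  fun y hy => (Vf_deriv hκ (hs y hy)).continuousAt.continuousWithinAt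

lemma qf_cont {s : Set ℝ} (hs : ∀ y ∈ s, y ≠ 0) : ContinuousOn (qf n κ) s :=
  fun y hy => (qf_deriv (hs y hy)).continuousAt.continuousWithinAt

/-- The energy is decreasing on intervals where `q > 0`. -/
lemma Ef_antitone {A R' : ℝ} (hA : 0 < A) (hκ : κ ≠ 0)
    (hq : ∀ y ∈ Icc A R', 0 < qf n κ y) :
    AntitoneOn (Ef n κ) (Icc A R') := by
  have hsub : ∀ y ∈ Icc A R', y ≠ 0 := fun y hy => (lt_of_lt_of_le hA hy.1).ne'
  apply antitoneOn_of_deriv_nonpos (convex_Icc A R')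
  · apply ContinuousOn.add
    · exact ((Vf_cont hκ hsub).pow 2).div (qf_cont hsub) (fun y hy => (hq y hy).ne')
    · exact (Uf_cont hκ hsub).pow 2
  · rw [interior_Icc]
    intro y hy
    have hy' : y ∈ Icc A R' := Ioo_subset_Icc_self hy
    have hy0 : y ≠ 0 := hsub y hy'
    have hE : HasDerivAt (Ef n κ)
        (((2 * Vf n κ y ^ 1 * (-(qf n κ y) * Uf n κ y)) * qf n κ y
            - Vf n κ y ^ 2 * (2 * ((n : ℝ) * ((n : ℝ) + 1)) / y ^ 3)) / (qf n κ y) ^ 2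
          + 2 * Uf n κ y ^ 1 * Vf n κ y) y := by
      exact ((((Vf_deriv hκ hy0).pow 2).div (qf_deriv hy0) (hq y hy').ne').add
        ((Uf_deriv hκ hy0).pow 2))
    exact hE.differentiableAt.differentiableWithinAt
  · rw [interior_Icc]
    intro y hy
    have hy' : y ∈ Icc A R' := Ioo_subset_Icc_self hy
    have hy0 : y ≠ 0 := hsub y hy'
    have hE : HasDerivAt (Ef n κ)
        (((2 * Vf n κ y ^ 1 * (-(qf n κ y) * Uf n κ y)) * qf n κ y
            - Vf n κ y ^ 2 * (2 * ((n : ℝ) * ((n : ℝ) + 1)) / y ^ 3)) / (qf n κ y) ^ 2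
          + 2 * Uf n κ y ^ 1 * Vf n κ y) y :=
      ((((Vf_deriv hκ hy0).pow 2).div (qf_deriv hy0) (hq y hy').ne').add
        ((Uf_deriv hκ hy0).pow 2))
    rw [hE.deriv]
    have hqy := hq y hy'
    have hval : ((2 * Vf n κ y ^ 1 * (-(qf n κ y) * Uf n κ y)) * qf n κ y
            - Vf n κ y ^ 2 * (2 * ((n : ℝ) * ((n : ℝ) + 1)) / y ^ 3)) / (qf n κ y) ^ 2
          + 2 * Uf n κ y ^ 1 * Vf n κ y
        = -(2 * ((n : ℝ) * ((n : ℝ) + 1)) / y ^ 3) * (Vf n κ y / qf n κ y) ^ 2 := by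
      field_simp
      ring
    rw [hval]
    apply mul_nonpos_of_nonpos_of_nonneg
    · apply neg_nonpos_of_nonneg
      have : (0:ℝ) < y := lt_of_lt_of_le hA hy'.1
      positivity
    · positivity

noncomputable section EQ
variable {A B : ℝ}

lemma equip (n : ℕ) (κ A B : ℝ) (hκ : 0 < κ) (hA : 0 < A) (hAB : A < B) :
    ∫ ρ in A..B, ((ρ - A) * (B - ρ)) ^ 2 * (Vf n κ ρ) ^ 2
      ≤ (2 * κ ^ 2 * ((B - A) / 2) ^ 4 + 4 * (B - A) ^ 2) * ∫ ρ in A..B, (Uf n κ ρ) ^ 2 := by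
  have hab : A ≤ B := hAB.le
  have huIcc : uIcc A B = Icc A B := uIcc_of_le hab
  have hne : ∀ y ∈ Icc A B, y ≠ 0 := fun y hy => (lt_of_lt_of_le hA hy.1).ne'
  have hκ' : κ ≠ 0 := hκ.ne'
  set s : ℝ → ℝ := fun ρ => (ρ - A) * (B - ρ) with hs_def
  set U : ℝ → ℝ := Uf n κ
  set V : ℝ → ℝ := Vf n κ
  set q : ℝ → ℝ := qf n κ
  -- continuity facts
  have hUc : ContinuousOn U (Icc A B) := Uf_cont hκ' hne
  have hVc : ContinuousOn V (Icc A B) := Vf_cont hκ' hne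
  have hqc : ContinuousOn q (Icc A B) := qf_cont hne
  have hsc : Continuous s := by fun_prop
  have hmc : Continuous (fun ρ : ℝ => A + B - 2 * ρ) := by fun_prop
  -- FTC identity
  have hFTC : ∫ ρ in A..B,
      ((2 * s ρ * (A + B - 2 * ρ)) * (U ρ * V ρ)
        + (s ρ) ^ 2 * (V ρ * V ρ + U ρ * (-(q ρ) * U ρ))) = 0 := by
    have hD : ∀ ρ ∈ uIcc A B, HasDerivAt (fun y => (s y) ^ 2 * (U y * V y))
        ((2 * s ρ * (A + B - 2 * ρ)) * (U ρ * V ρ)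
          + (s ρ) ^ 2 * (V ρ * V ρ + U ρ * (-(q ρ) * U ρ))) ρ := by
      intro ρ hρ
      rw [huIcc] at hρ
      have hρ0 : ρ ≠ 0 := hne ρ hρ
      have hds0 := (((hasDerivAt_id ρ).sub_const A)).mul ((hasDerivAt_const ρ B).sub (hasDerivAt_id ρ))
      simp only [id] at hds0
      have hds' : HasDerivAt s (A + B - 2 * ρ) ρ := by
        have heq0 : (1 : ℝ) * (B - ρ) + (ρ - A) * (0 - 1) = A + B - 2 * ρ := by ring
        simp only [Pi.sub_apply, id] at hds0
        rwa [heq0] at hds0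
      have hχ : HasDerivAt (fun y => (s y) ^ 2) (2 * s ρ ^ 1 * (A + B - 2 * ρ)) ρ := hds'.pow 2
      have hUV : HasDerivAt (fun y => U y * V y)
          (V ρ * V ρ + U ρ * (-(q ρ) * U ρ)) ρ :=
        (Uf_deriv hκ' hρ0).mul (Vf_deriv hκ' hρ0)
      have := hχ.mul hUV
      have heq : 2 * s ρ ^ 1 * (A + B - 2 * ρ) * (U ρ * V ρ)
            + (s ρ) ^ 2 * (V ρ * V ρ + U ρ * (-(q ρ) * U ρ))
          = (2 * s ρ * (A + B - 2 * ρ)) * (U ρ * V ρ)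
            + (s ρ) ^ 2 * (V ρ * V ρ + U ρ * (-(q ρ) * U ρ)) := by ring
      rwa [heq] at this
    have hint : IntervalIntegrable (fun ρ =>
        (2 * s ρ * (A + B - 2 * ρ)) * (U ρ * V ρ)
          + (s ρ) ^ 2 * (V ρ * V ρ + U ρ * (-(q ρ) * U ρ))) MeasureTheory.volume A B := by
      apply ContinuousOn.intervalIntegrable
      rw [huIcc]
      apply ContinuousOn.add
      · have hc1 : ContinuousOn (fun ρ => 2 * s ρ * (A + B - 2 * ρ)) (Icc A B) :=
          ((continuous_const.mul hsc).mul hmc).continuousOn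
        exact hc1.mul (hUc.mul hVc)
      · exact ((hsc.continuousOn.pow 2)).mul
          ((hVc.mul hVc).add (hUc.mul ((hqc.neg).mul hUc)))
    have := intervalIntegral.integral_eq_sub_of_hasDerivAt hD hint
    rw [this]
    have hsA : s A = 0 := by simp [hs_def]
    have hsB : s B = 0 := by simp [hs_def]
    simp [hsA, hsB]
  -- notation
  set f1 : ℝ → ℝ := fun ρ => (2 * s ρ * (A + B - 2 * ρ)) * (U ρ * V ρ) with hf1_def
  set f2 : ℝ → ℝ := fun ρ => (s ρ) ^ 2 * (V ρ) ^ 2 with hf2_def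
  set f3 : ℝ → ℝ := fun ρ => (s ρ) ^ 2 * (q ρ) * (U ρ) ^ 2 with hf3_def
  have hi1 : IntervalIntegrable f1 MeasureTheory.volume A B := by
    apply ContinuousOn.intervalIntegrable; rw [huIcc]
    exact (((continuous_const.mul hsc).mul hmc).continuousOn).mul (hUc.mul hVc)
  have hi2 : IntervalIntegrable f2 MeasureTheory.volume A B := by
    apply ContinuousOn.intervalIntegrable; rw [huIcc]
    exact ((hsc.pow 2).continuousOn).mul (hVc.pow 2)
  have hi3 : IntervalIntegrable f3 MeasureTheory.volume A B := by
    apply ContinuousOn.intervalIntegrable; rw [huIcc]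
    exact (((hsc.pow 2).continuousOn).mul hqc).mul (hUc.pow 2)
  have hiU : IntervalIntegrable (fun ρ => (U ρ) ^ 2) MeasureTheory.volume A B := by
    apply ContinuousOn.intervalIntegrable; rw [huIcc]
    exact hUc.pow 2
  have hfe : (fun ρ => f1 ρ + ((s ρ) ^ 2 * (V ρ * V ρ + U ρ * (-(q ρ) * U ρ))))
      = fun ρ => f1 ρ + (f2 ρ - f3 ρ) := by
    funext ρ; simp only [hf1_def, hf2_def, hf3_def]; ring
  have h0 : (∫ ρ in A..B, f1 ρ) + ((∫ ρ in A..B, f2 ρ) - ∫ ρ in A..B, f3 ρ) = 0 := by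
    have hFTC' : ∫ ρ in A..B, (f1 ρ + (f2 ρ - f3 ρ)) = 0 := by
      rw [← hfe]; exact hFTC
    rw [intervalIntegral.integral_add hi1 (hi2.sub hi3),
      intervalIntegral.integral_sub hi2 hi3] at hFTC'
    exact hFTC'
  set D := ∫ ρ in A..B, (U ρ) ^ 2 with hD_def
  have hD0 : 0 ≤ D := intervalIntegral.integral_nonneg hab (fun u _ => sq_nonneg _)
  -- pointwise bounds
  have hkey3 : ∫ ρ in A..B, f3 ρ ≤ κ ^ 2 * ((B - A) / 2) ^ 4 * D := by
    have : ∫ ρ in A..B, (κ ^ 2 * ((B - A) / 2) ^ 4) * (U ρ) ^ 2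
        = κ ^ 2 * ((B - A) / 2) ^ 4 * D := intervalIntegral.integral_const_mul _ _
    rw [← this]
    apply intervalIntegral.integral_mono_on hab hi3 (hiU.const_mul _)
    intro ρ hρ
    have hs0 : 0 ≤ s ρ := mul_nonneg (by linarith [hρ.1]) (by linarith [hρ.2])
    have hsle : s ρ ≤ ((B - A) / 2) ^ 2 := by
      simp only [hs_def]; nlinarith [sq_nonneg (A + B - 2 * ρ)]
    have hχle : (s ρ) ^ 2 ≤ ((B - A) / 2) ^ 4 := by
      nlinarith [hs0, hsle]
    have hqle : q ρ ≤ κ ^ 2 := by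
      have hρ0 : (0:ℝ) < ρ := lt_of_lt_of_le hA hρ.1
      have : 0 ≤ (n : ℝ) * ((n : ℝ) + 1) / ρ ^ 2 := by positivity
      have hq_eq : q ρ = κ ^ 2 - (n : ℝ) * ((n : ℝ) + 1) / ρ ^ 2 := rfl
      linarith [hq_eq, this]
    have h1 : (0:ℝ) ≤ (s ρ) ^ 2 * (U ρ) ^ 2 := by positivity
    have h2 : (0:ℝ) ≤ (κ ^ 2 - q ρ) * ((s ρ) ^ 2 * (U ρ) ^ 2) :=
      mul_nonneg (by linarith) h1
    have h3 : (0:ℝ) ≤ (((B - A) / 2) ^ 4 - (s ρ) ^ 2) * (κ ^ 2 * (U ρ) ^ 2) :=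
      mul_nonneg (by linarith) (by positivity)
    show (s ρ) ^ 2 * (q ρ) * (U ρ) ^ 2 ≤ κ ^ 2 * ((B - A) / 2) ^ 4 * (U ρ) ^ 2
    nlinarith [h2, h3]
  have hkey1 : -(∫ ρ in A..B, f1 ρ)
      ≤ (1/2) * (∫ ρ in A..B, f2 ρ) + (2 * (B - A) ^ 2) * D := by
    rw [← intervalIntegral.integral_neg]
    have hrhs : ∫ ρ in A..B, ((1/2) * f2 ρ + (2 * (B - A) ^ 2) * (U ρ) ^ 2)
        = (1/2) * (∫ ρ in A..B, f2 ρ) + (2 * (B - A) ^ 2) * D := by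
      rw [intervalIntegral.integral_add ((hi2.const_mul _)) (hiU.const_mul _),
        intervalIntegral.integral_const_mul, intervalIntegral.integral_const_mul]
    rw [← hrhs]
    apply intervalIntegral.integral_mono_on hab hi1.neg
      ((hi2.const_mul _).add (hiU.const_mul _))
    intro ρ hρ
    have hs0 : 0 ≤ s ρ := mul_nonneg (by linarith [hρ.1]) (by linarith [hρ.2])
    have hm : (A + B - 2 * ρ) ^ 2 ≤ (B - A) ^ 2 := by nlinarith [hρ.1, hρ.2]
    have h1 := sq_nonneg (s ρ * V ρ + 2 * (A + B - 2 * ρ) * U ρ)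
    have h2 : (0:ℝ) ≤ ((B - A) ^ 2 - (A + B - 2 * ρ) ^ 2) * (U ρ) ^ 2 :=
      mul_nonneg (by linarith) (sq_nonneg _)
    show -((2 * s ρ * (A + B - 2 * ρ)) * (U ρ * V ρ))
        ≤ (1/2) * ((s ρ) ^ 2 * (V ρ) ^ 2) + (2 * (B - A) ^ 2) * (U ρ) ^ 2
    nlinarith [h1, h2]
  have hkey2pos : 0 ≤ ∫ ρ in A..B, f2 ρ :=
    intervalIntegral.integral_nonneg hab (fun u _ => by positivity)
  linarith [h0, hkey3, hkey1]
end EQ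

set_option maxHeartbeats 1000000 in
/-- Main per-n estimate: outer mass is controlled by inner mass, uniformly in `n, κ`. -/
lemma main_est (n : ℕ) (κ A B R' κ₀ θ : ℝ)
    (hA : 0 < A) (hAB : A < B) (hBR : B < R')
    (hκ₀ : 0 < κ₀) (hκ : κ₀ ≤ κ)
    (hθ0 : 0 ≤ θ) (hθ1 : θ < 1)
    (hn : (n : ℝ) * ((n : ℝ) + 1) ≤ θ * (κ * A) ^ 2) :
    ∫ ρ in B..R', (Uf n κ ρ) ^ 2 ≤
      ((R' - B) * ((2 * ((B - A) / 2) ^ 4 + 4 * (B - A) ^ 2 / κ₀ ^ 2)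
          / ((1 - θ) * ((B - A) / 4) ^ 4) + 1) / (2 * ((B - A) / 4)))
        * ∫ ρ in A..B, (Uf n κ ρ) ^ 2 := by
  have hκpos : 0 < κ := lt_of_lt_of_le hκ₀ hκ
  have hκ' : κ ≠ 0 := hκpos.ne'
  set c : ℝ := 1 - θ with hc_def
  have hc : 0 < c := by simp only [hc_def]; linarith
  set hh : ℝ := (B - A) / 4 with hh_def
  have hhpos : 0 < hh := by simp only [hh_def]; linarith
  set A' : ℝ := A + hh with hA'_def
  set B' : ℝ := B - hh with hB'_def
  have hAA' : A < A' := by simp only [hA'_def]; linarith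
  have hA'B' : A' < B' := by simp only [hA'_def, hB'_def, hh_def]; linarith
  have hB'B : B' < B := by simp only [hB'_def]; linarith
  set SS : ℝ := ((B - A) / 2) ^ 4 with hSS_def
  set L : ℝ := (B - A) ^ 2 with hL_def
  -- q bounds on [A, R']
  have hq_lb : ∀ ρ ∈ Icc A R', c * κ ^ 2 ≤ qf n κ ρ := by
    intro ρ hρ
    have hρA : A ≤ ρ := hρ.1
    have hρ0 : 0 < ρ := lt_of_lt_of_le hA hρA
    have hA2 : A ^ 2 ≤ ρ ^ 2 := by nlinarith
    have h1 : (n : ℝ) * ((n : ℝ) + 1) ≤ θ * κ ^ 2 * ρ ^ 2 := by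
      have h1a : θ * (κ * A) ^ 2 = θ * κ ^ 2 * A ^ 2 := by ring
      have h1b : θ * κ ^ 2 * A ^ 2 ≤ θ * κ ^ 2 * ρ ^ 2 :=
        mul_le_mul_of_nonneg_left hA2 (by positivity)
      linarith [hn, h1a, h1b]
    have h2 : (n : ℝ) * ((n : ℝ) + 1) / ρ ^ 2 ≤ θ * κ ^ 2 := by
      rw [div_le_iff₀ (by positivity)]
      linarith
    have hq_eq : qf n κ ρ = κ ^ 2 - (n : ℝ) * ((n : ℝ) + 1) / ρ ^ 2 := rfl
    rw [hq_eq]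
    simp only [hc_def]
    nlinarith
  have hq_pos : ∀ ρ ∈ Icc A R', 0 < qf n κ ρ := fun ρ hρ =>
    lt_of_lt_of_le (by positivity) (hq_lb ρ hρ)
  have hE_anti : AntitoneOn (Ef n κ) (Icc A R') := Ef_antitone hA hκ' hq_pos
  have hne : ∀ y ∈ Icc A R', y ≠ 0 := fun y hy => (lt_of_lt_of_le hA hy.1).ne'
  have hABR : A ≤ B := hAB.le
  have hBR' : B ≤ R' := hBR.le
  -- continuity on subsets of Icc A R'
  have hsubAB : Icc A B ⊆ Icc A R' := Icc_subset_Icc le_rfl hBR'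
  have hsubA'B' : Icc A' B' ⊆ Icc A R' := Icc_subset_Icc hAA'.le (by linarith)
  have hsubBR : Icc B R' ⊆ Icc A R' := Icc_subset_Icc hABR le_rfl
  have hUc : ContinuousOn (Uf n κ) (Icc A R') := Uf_cont hκ' hne
  have hVc : ContinuousOn (Vf n κ) (Icc A R') := Vf_cont hκ' hne
  have hqc : ContinuousOn (qf n κ) (Icc A R') := qf_cont hne
  have hEc : ContinuousOn (Ef n κ) (Icc A R') :=
    ((hVc.pow 2).div hqc (fun y hy => (hq_pos y hy).ne')).add (hUc.pow 2)
  set D := ∫ ρ in A..B, (Uf n κ ρ) ^ 2 with hD_def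
  have hD0 : 0 ≤ D := intervalIntegral.integral_nonneg hABR (fun u _ => sq_nonneg _)
  set X := ∫ ρ in A'..B', (Vf n κ ρ) ^ 2 with hX_def
  have hX0 : 0 ≤ X := intervalIntegral.integral_nonneg hA'B'.le (fun u _ => sq_nonneg _)
  -- Step 5 : X ≤ (2κ²SS + 4L)/h⁴ * D
  have step5 : X ≤ (2 * κ ^ 2 * SS + 4 * L) / hh ^ 4 * D := by
    have hiV2 : IntervalIntegrable (fun ρ => (Vf n κ ρ) ^ 2) MeasureTheory.volume A' B' := by
      apply ContinuousOn.intervalIntegrable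
      rw [uIcc_of_le hA'B'.le]
      exact (hVc.mono hsubA'B').pow 2
    have hiχV2 : IntervalIntegrable (fun ρ => ((ρ - A) * (B - ρ)) ^ 2 * (Vf n κ ρ) ^ 2)
        MeasureTheory.volume A' B' := by
      apply ContinuousOn.intervalIntegrable
      rw [uIcc_of_le hA'B'.le]
      exact (((continuous_id.sub continuous_const).mul
        (continuous_const.sub continuous_id)).pow 2).continuousOn.mul
        ((hVc.mono hsubA'B').pow 2)
    have h51 : hh ^ 4 * X ≤ ∫ ρ in A'..B', ((ρ - A) * (B - ρ)) ^ 2 * (Vf n κ ρ) ^ 2 := by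
      have : hh ^ 4 * X = ∫ ρ in A'..B', hh ^ 4 * (Vf n κ ρ) ^ 2 :=
        (intervalIntegral.integral_const_mul _ _).symm
      rw [this]
      apply intervalIntegral.integral_mono_on hA'B'.le (hiV2.const_mul _) hiχV2
      intro ρ hρ
      have h1 : hh ≤ ρ - A := by
        have h1a := hρ.1; linarith [hA'_def, h1a]
      have h2 : hh ≤ B - ρ := by
        have h2a := hρ.2; linarith [hB'_def, h2a]
      have h3 : hh ^ 2 ≤ (ρ - A) * (B - ρ) := by nlinarith
      have h4 : hh ^ 4 ≤ ((ρ - A) * (B - ρ)) ^ 2 := by nlinarith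
      exact mul_le_mul_of_nonneg_right h4 (sq_nonneg _)
    have h52 : ∫ ρ in A'..B', ((ρ - A) * (B - ρ)) ^ 2 * (Vf n κ ρ) ^ 2
        ≤ ∫ ρ in A..B, ((ρ - A) * (B - ρ)) ^ 2 * (Vf n κ ρ) ^ 2 := by
      apply intervalIntegral.integral_mono_interval hAA'.le hA'B'.le hB'B.le
      · apply MeasureTheory.ae_of_all
        intro ρ
        positivity
      · apply ContinuousOn.intervalIntegrable
        rw [uIcc_of_le hABR]
        exact (((continuous_id.sub continuous_const).mul
          (continuous_const.sub continuous_id)).pow 2).continuousOn.mul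
          ((hVc.mono hsubAB).pow 2)
    have h53 := equip n κ A B hκpos hA hAB
    have h54 : hh ^ 4 * X ≤ (2 * κ ^ 2 * SS + 4 * L) * D := by
      calc hh ^ 4 * X ≤ _ := h51
        _ ≤ _ := h52
        _ ≤ _ := h53
    rw [div_mul_eq_mul_div, le_div_iff₀ (by positivity)]
    linarith [h54]
  -- Step 6 : ∫_{A'}^{B'} Ef ≤ X/(cκ²) + D
  have hiE : IntervalIntegrable (Ef n κ) MeasureTheory.volume A' B' := by
    apply ContinuousOn.intervalIntegrable
    rw [uIcc_of_le hA'B'.le]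
    exact hEc.mono hsubA'B'
  have hiV2' : IntervalIntegrable (fun ρ => (Vf n κ ρ) ^ 2) MeasureTheory.volume A' B' := by
    apply ContinuousOn.intervalIntegrable
    rw [uIcc_of_le hA'B'.le]
    exact (hVc.mono hsubA'B').pow 2
  have hiU2' : IntervalIntegrable (fun ρ => (Uf n κ ρ) ^ 2) MeasureTheory.volume A' B' := by
    apply ContinuousOn.intervalIntegrable
    rw [uIcc_of_le hA'B'.le]
    exact (hUc.mono hsubA'B').pow 2
  have hDsub : ∫ ρ in A'..B', (Uf n κ ρ) ^ 2 ≤ D := by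
    apply intervalIntegral.integral_mono_interval hAA'.le hA'B'.le hB'B.le
    · exact MeasureTheory.ae_of_all _ (fun ρ => sq_nonneg _)
    · apply ContinuousOn.intervalIntegrable
      rw [uIcc_of_le hABR]
      exact (hUc.mono hsubAB).pow 2
  have step6 : ∫ ρ in A'..B', Ef n κ ρ ≤ X / (c * κ ^ 2) + D := by
    have hmono : ∫ ρ in A'..B', Ef n κ ρ
        ≤ ∫ ρ in A'..B', ((Vf n κ ρ) ^ 2 / (c * κ ^ 2) + (Uf n κ ρ) ^ 2) := by
      apply intervalIntegral.integral_mono_on hA'B'.le hiE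
        ((hiV2'.div_const _).add hiU2')
      intro ρ hρ
      have hρ' : ρ ∈ Icc A R' := hsubA'B' hρ
      have h1 : (Vf n κ ρ) ^ 2 / qf n κ ρ ≤ (Vf n κ ρ) ^ 2 / (c * κ ^ 2) :=
        div_le_div_of_nonneg_left (sq_nonneg _) (by positivity) (hq_lb ρ hρ')
      have hE_eq : Ef n κ ρ = (Vf n κ ρ) ^ 2 / qf n κ ρ + (Uf n κ ρ) ^ 2 := rfl
      rw [hE_eq]
      linarith
    have hsplit : ∫ ρ in A'..B', ((Vf n κ ρ) ^ 2 / (c * κ ^ 2) + (Uf n κ ρ) ^ 2)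
        = X / (c * κ ^ 2) + ∫ ρ in A'..B', (Uf n κ ρ) ^ 2 := by
      rw [intervalIntegral.integral_add (hiV2'.div_const _) hiU2',
        intervalIntegral.integral_div]
    linarith [hmono, hsplit, hDsub]
  -- Step 7 : Ef B * (2h) ≤ ∫_{A'}^{B'} Ef
  have hBmem : B ∈ Icc A R' := ⟨hABR, hBR'⟩
  have step7 : Ef n κ B * (2 * hh) ≤ ∫ ρ in A'..B', Ef n κ ρ := by
    have hconst : ∫ ρ in A'..B', Ef n κ B = (B' - A') * Ef n κ B := by
      rw [intervalIntegral.integral_const, smul_eq_mul]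
    have hmono : ∫ ρ in A'..B', Ef n κ B ≤ ∫ ρ in A'..B', Ef n κ ρ := by
      apply intervalIntegral.integral_mono_on hA'B'.le
        (intervalIntegrable_const) hiE
      intro ρ hρ
      exact hE_anti (hsubA'B' hρ) hBmem (hρ.2.trans hB'B.le)
    have hBA : B' - A' = 2 * hh := by
      rw [hB'_def, hA'_def, hh_def]; ring
    calc Ef n κ B * (2 * hh) = (B' - A') * Ef n κ B := by rw [hBA]; ring
      _ = ∫ ρ in A'..B', Ef n κ B := hconst.symm
      _ ≤ _ := hmono
  -- Step 8 : ∫_B^{R'} U² ≤ (R'-B) * Ef B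
  have step8 : ∫ ρ in B..R', (Uf n κ ρ) ^ 2 ≤ (R' - B) * Ef n κ B := by
    have hiU2'' : IntervalIntegrable (fun ρ => (Uf n κ ρ) ^ 2) MeasureTheory.volume B R' := by
      apply ContinuousOn.intervalIntegrable
      rw [uIcc_of_le hBR']
      exact (hUc.mono hsubBR).pow 2
    have hmono : ∫ ρ in B..R', (Uf n κ ρ) ^ 2 ≤ ∫ ρ in B..R', Ef n κ B := by
      apply intervalIntegral.integral_mono_on hBR' hiU2'' intervalIntegrable_const
      intro ρ hρ
      have hρ' : ρ ∈ Icc A R' := hsubBR hρ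
      have h1 : (Uf n κ ρ) ^ 2 ≤ Ef n κ ρ := by
        have hE_eq : Ef n κ ρ = (Vf n κ ρ) ^ 2 / qf n κ ρ + (Uf n κ ρ) ^ 2 := rfl
        have : 0 ≤ (Vf n κ ρ) ^ 2 / qf n κ ρ :=
          div_nonneg (sq_nonneg _) (hq_pos ρ hρ').le
        rw [hE_eq]; linarith
      exact h1.trans (hE_anti hBmem hρ' hρ.1)
    rw [intervalIntegral.integral_const, smul_eq_mul] at hmono
    exact hmono
  -- final arithmetic
  have hEB0 : 0 ≤ Ef n κ B := by
    have hE_eq : Ef n κ B = (Vf n κ B) ^ 2 / qf n κ B + (Uf n κ B) ^ 2 := rfl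
    have : 0 ≤ (Vf n κ B) ^ 2 / qf n κ B := div_nonneg (sq_nonneg _) (hq_pos B hBmem).le
    rw [hE_eq]; positivity
  have e2 : X / (c * κ ^ 2) ≤ ((2 * SS + 4 * L / κ₀ ^ 2) / (c * hh ^ 4)) * D := by
    have ha : X / (c * κ ^ 2) ≤ ((2 * κ ^ 2 * SS + 4 * L) / hh ^ 4 * D) / (c * κ ^ 2) :=
      div_le_div_of_nonneg_right step5 (by positivity)
    have hL0 : 0 ≤ L := by rw [hL_def]; positivity
    have hSS0 : 0 ≤ SS := by rw [hSS_def]; positivity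
    have hdiv : 4 * L / κ ^ 2 ≤ 4 * L / κ₀ ^ 2 := by
      apply div_le_div_of_nonneg_left (by linarith) (by positivity)
      nlinarith
    have hb : ((2 * κ ^ 2 * SS + 4 * L) / hh ^ 4 * D) / (c * κ ^ 2)
        = ((2 * SS + 4 * L / κ ^ 2) / (c * hh ^ 4)) * D := by
      field_simp
    have hcmp : ((2 * SS + 4 * L / κ ^ 2) / (c * hh ^ 4)) * D
        ≤ ((2 * SS + 4 * L / κ₀ ^ 2) / (c * hh ^ 4)) * D := by
      apply mul_le_mul_of_nonneg_right _ hD0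
      apply div_le_div_of_nonneg_right _ (by positivity)
      linarith
    calc X / (c * κ ^ 2) ≤ _ := ha
      _ = _ := hb
      _ ≤ _ := hcmp
  set K : ℝ := (2 * SS + 4 * L / κ₀ ^ 2) / (c * hh ^ 4) + 1 with hK_def
  have eK : Ef n κ B * (2 * hh) ≤ K * D := by
    have h1 : Ef n κ B * (2 * hh) ≤ X / (c * κ ^ 2) + D := step7.trans step6
    have h2 : ((2 * SS + 4 * L / κ₀ ^ 2) / (c * hh ^ 4)) * D + D = K * D := by
      rw [hK_def]; ring
    calc Ef n κ B * (2 * hh) ≤ X / (c * κ ^ 2) + D := h1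
      _ ≤ ((2 * SS + 4 * L / κ₀ ^ 2) / (c * hh ^ 4)) * D + D := by linarith [e2]
      _ = K * D := h2
  have eEB : Ef n κ B ≤ K * D / (2 * hh) := by
    rw [le_div_iff₀ (by positivity)]
    exact eK
  calc ∫ ρ in B..R', (Uf n κ ρ) ^ 2 ≤ (R' - B) * Ef n κ B := step8
    _ ≤ (R' - B) * (K * D / (2 * hh)) :=
        mul_le_mul_of_nonneg_left eEB (by linarith)
    _ = ((R' - B) * K / (2 * hh)) * D := by ring

lemma Uf_zero (n : ℕ) (κ : ℝ) : Uf n κ 0 = 0 := by simp [Uf]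

lemma Uf_abs_le (n : ℕ) {κ ρ : ℝ} (hκ : 0 < κ) (hρ : 0 ≤ ρ) (h1 : κ * ρ ≤ 1) :
    |Uf n κ ρ| ≤ ρ := by
  rcases eq_or_lt_of_le hρ with h | h
  · rw [← h, Uf_zero]; simp
  · have hx : 0 < κ * ρ := by positivity
    have hb := sbj_bd n (κ * ρ) hx h1
    have heq : |κ * ρ * sbj n (κ * ρ)| = κ * |Uf n κ ρ| := by
      have h2 : κ * ρ * sbj n (κ * ρ) = κ * (Uf n κ ρ) := by simp [Uf]; ring
      rw [h2, abs_mul, abs_of_pos hκ]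
    rw [heq] at hb
    have := (mul_le_mul_iff_right₀ hκ).1 hb
    exact this

lemma Usq_contOn (n : ℕ) {κ : ℝ} (hκ : 0 < κ) {T : ℝ} :
    ContinuousOn (fun ρ => (Uf n κ ρ) ^ 2) (Icc 0 T) := by
  intro y hy
  rcases eq_or_lt_of_le hy.1 with h | h
  · -- y = 0 : continuity via squeeze
    rw [← h]
    have hval : (Uf n κ 0) ^ 2 = 0 := by rw [Uf_zero]; ring
    unfold ContinuousWithinAt
    have hval2 : (fun ρ => Uf n κ ρ ^ 2) 0 = 0 := hval
    rw [hval2]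
    apply squeeze_zero_norm' (a := fun ρ : ℝ => ρ ^ 2)
    · have hev : ∀ᶠ ρ in nhdsWithin 0 (Icc 0 T), |ρ| < 1 / κ := by
        apply eventually_nhdsWithin_of_eventually_nhds
        have : Tendsto (fun ρ : ℝ => |ρ|) (nhds 0) (nhds 0) := by
          simpa using (continuous_abs.tendsto (0:ℝ))
        exact this.eventually_lt_const (by positivity)
      have hmem : ∀ᶠ ρ in nhdsWithin 0 (Icc 0 T), ρ ∈ Icc 0 T :=
        eventually_mem_nhdsWithin
      filter_upwards [hev, hmem] with ρ hρ1 hρ2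
      have hρ0 : 0 ≤ ρ := hρ2.1
      have hκρ : κ * ρ ≤ 1 := by
        rw [abs_of_nonneg hρ0] at hρ1
        have := (lt_div_iff₀' hκ).1 hρ1
        linarith
      have := Uf_abs_le n hκ hρ0 hκρ
      have h2 : ‖(Uf n κ ρ) ^ 2‖ = |Uf n κ ρ| ^ 2 := by
        rw [Real.norm_eq_abs, abs_pow, sq_abs, ← sq_abs]
      rw [h2]
      have habs : 0 ≤ |Uf n κ ρ| := abs_nonneg _
      nlinarith
    · have h2 : Tendsto (fun ρ : ℝ => ρ ^ 2) (nhds 0) (nhds 0) := by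
        have : ContinuousAt (fun ρ : ℝ => ρ ^ 2) 0 := by fun_prop
        simpa using this.tendsto
      exact tendsto_nhdsWithin_of_tendsto_nhds h2
  · exact (((Uf_deriv hκ.ne' h.ne').continuousAt).pow 2).continuousWithinAt

lemma Usq_intble (n : ℕ) {κ : ℝ} (hκ : 0 < κ) {a b : ℝ} (ha : 0 ≤ a) (hab : a ≤ b) :
    IntervalIntegrable (fun ρ => (Uf n κ ρ) ^ 2) MeasureTheory.volume a b := by
  apply ContinuousOn.intervalIntegrable
  rw [uIcc_of_le hab]
  exact (Usq_contOn n hκ (T := b)).mono (Icc_subset_Icc ha le_rfl)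

/-- for mono-localized eigenvalues `kₙ ∈ (r_{n,s₁(n)}/R, r_{n,s₂(n)}/R)`,
the radial `L²`-mass ratio of `jₙ(kₙε₀ρ)` over `[0,τ]` versus `[0,R]` has positive
liminf for every `τ ∈ (R/ε₀, R)` (`E₁⁽ⁿ⁾` is not surface-localized). -/
theorem non_localization_of_E1
    (ε₀ R γ₁ γ₂ : ℝ) (hε : 1 < ε₀) (hR : 0 < R)
    (hγ₁ : 0 < γ₁) (hγ₁₂ : γ₁ < γ₂) (hγ₂ : γ₂ < 1)
    (r : ℕ → ℕ → ℝ) (hr : ∀ n, IsZeroEnum n (r n))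
    (k : ℕ → ℝ) (hkpos : ∀ n, 0 < k n)
    (hk : ∀ᶠ n in atTop, k n ∈ Set.Ioo (r n ⌊((n : ℝ) + 1 / 2) ^ γ₁⌋₊ / R)
                                       (r n ⌊((n : ℝ) + 1 / 2) ^ γ₂⌋₊ / R)) :
    ∀ τ ∈ Set.Ioo (R / ε₀) R,
      0 < Filter.liminf (fun n =>
          (∫ ρ in (0 : ℝ)..τ, sbj n (k n * ε₀ * ρ) ^ 2 * ρ ^ 2) /
          (∫ ρ in (0 : ℝ)..R, sbj n (k n * ε₀ * ρ) ^ 2 * ρ ^ 2))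
        atTop := by
  intro τ hτ
  obtain ⟨hτ1, hτ2⟩ := hτ
  have hε0 : 0 < ε₀ := by linarith
  have hRε : 0 < R / ε₀ := by positivity
  have hτpos : 0 < τ := lt_trans hRε hτ1
  -- fixed geometry
  set A : ℝ := (R / ε₀ + τ) / 2 with hA_def
  have hA0 : 0 < A := by positivity
  have hRεA : R / ε₀ < A := by rw [hA_def]; linarith
  have hAτ : A < τ := by rw [hA_def]; linarith
  set θ : ℝ := (R / (ε₀ * A)) ^ 2 with hθ_def
  have hθ0 : 0 ≤ θ := sq_nonneg _
  have hθx : R / (ε₀ * A) < 1 := by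
    rw [div_lt_one (by positivity)]
    rw [div_lt_iff₀ hε0] at hRεA
    linarith
  have hθ1 : θ < 1 := by
    rw [hθ_def]
    nlinarith [hθx, sq_nonneg (R / (ε₀ * A)), div_nonneg hR.le (by positivity : (0:ℝ) ≤ ε₀ * A)]
  set κ₀ : ℝ := π * ε₀ / R with hκ₀_def
  have hκ₀pos : 0 < κ₀ := by rw [hκ₀_def]; positivity
  -- the constant from main_est
  set Cst : ℝ := ((R - τ) * ((2 * ((τ - A) / 2) ^ 4 + 4 * (τ - A) ^ 2 / κ₀ ^ 2)
      / ((1 - θ) * ((τ - A) / 4) ^ 4) + 1) / (2 * ((τ - A) / 4))) with hCst_def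
  have hCst0 : 0 ≤ Cst := by
    rw [hCst_def]
    have h1 : 0 < (1 - θ) * ((τ - A) / 4) ^ 4 := by
      apply mul_pos (by linarith)
      have : 0 < τ - A := by linarith
      positivity
    have h2 : 0 ≤ (2 * ((τ - A) / 2) ^ 4 + 4 * (τ - A) ^ 2 / κ₀ ^ 2) := by positivity
    have h3 : 0 ≤ (2 * ((τ - A) / 2) ^ 4 + 4 * (τ - A) ^ 2 / κ₀ ^ 2)
        / ((1 - θ) * ((τ - A) / 4) ^ 4) := div_nonneg h2 h1.le
    have h4 : 0 < 2 * ((τ - A) / 4) := by linarith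
    apply div_nonneg (mul_nonneg (by linarith) (by linarith)) h4.le
  set ε : ℝ := 1 / (1 + Cst) with hε_def
  have hεpos : 0 < ε := by rw [hε_def]; positivity
  -- the eventual bound
  have hev : ∀ᶠ n in atTop, ε ≤ (∫ ρ in (0 : ℝ)..τ, sbj n (k n * ε₀ * ρ) ^ 2 * ρ ^ 2) /
          (∫ ρ in (0 : ℝ)..R, sbj n (k n * ε₀ * ρ) ^ 2 * ρ ^ 2) ∧
      (∫ ρ in (0 : ℝ)..τ, sbj n (k n * ε₀ * ρ) ^ 2 * ρ ^ 2) /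
          (∫ ρ in (0 : ℝ)..R, sbj n (k n * ε₀ * ρ) ^ 2 * ρ ^ 2) ≤ 1 := by
    filter_upwards [hk, eventually_ge_atTop 1] with n hkn hn1
    -- the first index is ≥ 1
    have hs₁ : 1 ≤ ⌊((n : ℝ) + 1 / 2) ^ γ₁⌋₊ := by
      apply Nat.le_floor
      push_cast
      apply Real.one_le_rpow _ hγ₁.le
      have : (1:ℝ) ≤ (n:ℝ) := by exact_mod_cast hn1
      linarith
    obtain ⟨hmono, hr1pos, hzeros, -⟩ := hr n
    have hr1z : sbj n (r n 1) = 0 := hzeros 1 le_rfl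
    have hπr1 : π ≤ r n 1 := by
      by_contra hc
      push_neg at hc
      have := sbj_pos n (r n 1) hr1pos hc
      rw [hr1z] at this
      exact lt_irrefl 0 this
    have hnn : (n : ℝ) * ((n : ℝ) + 1) < (r n 1) ^ 2 := by
      by_contra hc
      push_neg at hc
      have := sbj_pos_of_sq_le n (r n 1) hr1pos hc
      rw [hr1z] at this
      exact lt_irrefl 0 this
    have hr1s₁ : r n 1 ≤ r n ⌊((n : ℝ) + 1 / 2) ^ γ₁⌋₊ := by
      rcases eq_or_lt_of_le hs₁ with h | h
      · rw [← h]
      · exact (hmono (mem_Ici.2 le_rfl) (mem_Ici.2 hs₁) h).le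
    have hkR : r n ⌊((n : ℝ) + 1 / 2) ^ γ₁⌋₊ / R < k n := hkn.1
    have hknR : r n 1 < k n * R := by
      rw [div_lt_iff₀ hR] at hkR
      linarith
    set κ : ℝ := k n * ε₀ with hκ_def
    have hκpos : 0 < κ := by rw [hκ_def]; exact mul_pos (hkpos n) hε0
    have hκκ₀ : κ₀ ≤ κ := by
      rw [hκ₀_def, hκ_def, div_le_iff₀ hR]
      nlinarith [hknR, hπr1, Real.pi_pos]
    have hn' : (n : ℝ) * ((n : ℝ) + 1) ≤ θ * (κ * A) ^ 2 := by
      have he : θ * (κ * A) ^ 2 = (k n * R) ^ 2 := by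
        rw [hθ_def, hκ_def]
        field_simp
      rw [he]
      have h1 : (r n 1) ^ 2 ≤ (k n * R) ^ 2 := by
        have h2 : 0 < r n 1 := hr1pos
        nlinarith [hknR]
      linarith
    have hest := main_est n κ A τ R κ₀ θ hA0 hAτ hτ2 hκ₀pos hκκ₀ hθ0 hθ1 hn'
    -- convert integrands
    have hconv : ∀ a b : ℝ, (∫ ρ in a..b, sbj n (k n * ε₀ * ρ) ^ 2 * ρ ^ 2)
        = ∫ ρ in a..b, (Uf n κ ρ) ^ 2 := by
      intro a b
      apply intervalIntegral.integral_congr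
      intro ρ _
      simp only [Uf, hκ_def]
      ring_nf
    rw [hconv 0 τ, hconv 0 R]
    set N := ∫ ρ in (0:ℝ)..τ, (Uf n κ ρ) ^ 2 with hN_def
    set Fv := ∫ ρ in τ..R, (Uf n κ ρ) ^ 2 with hF_def
    set D := ∫ ρ in A..τ, (Uf n κ ρ) ^ 2 with hD_def
    have hint0τ := Usq_intble n hκpos (le_refl (0:ℝ)) hτpos.le
    have hintτR := Usq_intble n hκpos hτpos.le hτ2.le
    have hsplit : (∫ ρ in (0:ℝ)..R, (Uf n κ ρ) ^ 2) = N + Fv :=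
      (intervalIntegral.integral_add_adjacent_intervals hint0τ hintτR).symm
    have hNpos : 0 < N := by
      rw [hN_def]
      apply intervalIntegral.integral_pos hτpos
      · exact (Usq_contOn n hκpos).mono (Icc_subset_Icc le_rfl le_rfl)
      · exact fun x _ => sq_nonneg _
      · refine ⟨min (τ / 2) (π / (2 * κ)), ⟨le_min (by linarith) (by positivity), ?_⟩, ?_⟩
        · exact (min_le_left _ _).trans (by linarith)
        · have hc0 : 0 < min (τ / 2) (π / (2 * κ)) :=
            lt_min (by linarith) (by positivity)
          have hcπ : κ * min (τ / 2) (π / (2 * κ)) < π := by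
            have h1 : min (τ / 2) (π / (2 * κ)) ≤ π / (2 * κ) := min_le_right _ _
            have h2 : κ * (π / (2 * κ)) = π / 2 := by field_simp
            nlinarith [Real.pi_pos, mul_le_mul_of_nonneg_left h1 hκpos.le]
          have hsbj : 0 < sbj n (κ * min (τ / 2) (π / (2 * κ))) :=
            sbj_pos n _ (by positivity) hcπ
          have : 0 < Uf n κ (min (τ / 2) (π / (2 * κ))) := mul_pos hc0 hsbj
          positivity
    have hFv0 : 0 ≤ Fv := intervalIntegral.integral_nonneg hτ2.le (fun u _ => sq_nonneg _)
    have hDN : D ≤ N := by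
      rw [hD_def, hN_def]
      apply intervalIntegral.integral_mono_interval hA0.le hAτ.le le_rfl
        (MeasureTheory.ae_of_all _ (fun ρ => sq_nonneg _)) hint0τ
    have hFvCst : Fv ≤ Cst * N := by
      have h1 : Fv ≤ Cst * D := by rw [hCst_def]; exact hest
      have h2 : Cst * D ≤ Cst * N := mul_le_mul_of_nonneg_left hDN hCst0
      linarith
    constructor
    · rw [hsplit, hε_def]
      rw [div_le_div_iff₀ (by positivity) (by linarith)]
      nlinarith [hFvCst, hNpos]
    · rw [hsplit]
      rw [div_le_one (by linarith)]
      linarith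
  have hco : IsCoboundedUnder (· ≥ ·) atTop (fun n =>
      (∫ ρ in (0 : ℝ)..τ, sbj n (k n * ε₀ * ρ) ^ 2 * ρ ^ 2) /
      (∫ ρ in (0 : ℝ)..R, sbj n (k n * ε₀ * ρ) ^ 2 * ρ ^ 2)) :=
    isCoboundedUnder_ge_of_eventually_le atTop (hev.mono (fun n hn => hn.2))
  have hle := le_liminf_of_le hco (hev.mono (fun n hn => hn.1))
  exact lt_of_lt_of_le hεpos hle
end
end
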